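/- arXiv:2510.10678 — 9 statements merged into one kernel-verified Lean document; each statement's English description precedes it below -/
import Mathlib

section
/- Assume p₂,…,p_r are odd. Then the integer -((r-1)(r-2)/2)·P + (r-2)·Σ_{i=1}^r P/p_i - Σ_{1 ≤ i < j ≤ r} P/(p_i p_j) is odd. -/
/-!
Work modulo 2. If every `p i` is odd, so are `P` and all the cofactors, and the expression is
congruent to `-c + (r - 2) r - C(r, 2)` with `c = (r - 1)(r - 2) / 2`; since
`c + C(r, 2) = (r - 1)²` this integer is exactly `-1`. Otherwise `p₁` is the only even factor:
then `P` and every cofactor still divisible by `p₁` are even, while `P / p₁` and `P / (p₁ p_j)`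
are odd, so the expression is congruent to `(r - 2) - (r - 1) = -1`.
-/
open Finset

theorem Fintype.sum_sum_filter_lt_one {α R : Type*} [Fintype α] [LinearOrder α]
    [AddCommMonoidWithOne R] :
    ∑ i : α, ∑ _ ∈ univ.filter (fun j => i < j), (1 : R) = ((Fintype.card α).choose 2 : R) := by
  rw [← Fintype.card_product_filter_lt, card_filter, Nat.cast_sum, Fintype.sum_prod_type]
  simp

theorem Fin.sum_sum_filter_lt_succ {R : Type*} [AddCommMonoid R] {n : ℕ}
    (f : Fin (n + 1) → Fin (n + 1) → R) :
    ∑ i, ∑ j ∈ univ.filter (fun j => i < j), f i j =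
      ∑ j : Fin n, f 0 j.succ +
        ∑ i : Fin n, ∑ j ∈ univ.filter (fun j => i < j), f i.succ j.succ := by
  simp only [sum_filter]
  rw [Fin.sum_univ_succ]
  simp [Fin.sum_univ_succ, Fin.succ_pos]

theorem Int.choose_two_mul_two (r : ℕ) : (r.choose 2 : ℤ) * 2 = r * (r - 1) := by
  have h : ((r.choose 2 : ℤ) : ℚ) * 2 = ((r * (r - 1) : ℤ) : ℚ) := by
    push_cast; rw [Nat.cast_choose_two]; ring
  exact_mod_cast h

theorem Int.neg_half_mul_add_sub_choose_two (r : ℕ) :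
    -((((r : ℤ) - 1) * ((r : ℤ) - 2)) / 2) + ((r : ℤ) - 2) * r - (r.choose 2 : ℤ) = -1 := by
  obtain ⟨k, hk⟩ := Int.even_mul_succ_self ((r : ℤ) - 2)
  have hc : (((r : ℤ) - 1) * ((r : ℤ) - 2)) / 2 = k := by
    rw [show ((r : ℤ) - 1) * ((r : ℤ) - 2) = 2 * k by linarith]; omega
  rw [hc]; nlinarith [Int.choose_two_mul_two r]

theorem ZMod.intCast_eq_of_mul_eq {a b c : ℤ} (ha : (a : ZMod 2) = 1) (h : a * b = c) :
    (b : ZMod 2) = c := by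
  simpa [ha] using congrArg (Int.cast : ℤ → ZMod 2) h

section CofactorParityOfOdd

variable {ι : Type*} [Fintype ι] [LinearOrder ι] {p phat : ι → ℤ} {phat2 : ι → ι → ℤ} {P : ℤ}

theorem intCast_cofactor_sums_of_forall_odd (hodd : ∀ j, Odd (p j)) (hP : P = ∏ j, p j)
    (hphat : ∀ j, p j * phat j = P) (hphat2 : ∀ i j, i ≠ j → p i * p j * phat2 i j = P) :
    (P : ZMod 2) = 1 ∧ ∑ i, (phat i : ZMod 2) = Fintype.card ι ∧
      ∑ i, ∑ j ∈ univ.filter (fun j => i < j), (phat2 i j : ZMod 2) =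
        (Fintype.card ι).choose 2 := by
  have hp : ∀ j, (p j : ZMod 2) = 1 := fun j => ZMod.intCast_eq_one_iff_odd.mpr (hodd j)
  have hP1 : (P : ZMod 2) = 1 := by
    rw [hP]; push_cast; exact prod_eq_one fun j _ => hp j
  have hphat1 : ∀ j, (phat j : ZMod 2) = 1 := fun j =>
    (ZMod.intCast_eq_of_mul_eq (hp j) (hphat j)).trans hP1
  have hphat21 : ∀ i j, i ≠ j → (phat2 i j : ZMod 2) = 1 := fun i j hij =>
    (ZMod.intCast_eq_of_mul_eq (by push_cast; rw [hp, hp, one_mul]) (hphat2 i j hij)).trans hP1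
  refine ⟨hP1, by simp [hphat1], ?_⟩
  rw [← Fintype.sum_sum_filter_lt_one]
  exact sum_congr rfl fun i _ => sum_congr rfl fun j hj => hphat21 i j (mem_filter.mp hj).2.ne

end CofactorParityOfOdd

section CofactorParityOfEvenZero

variable {n : ℕ} {p phat : Fin (n + 1) → ℤ} {phat2 : Fin (n + 1) → Fin (n + 1) → ℤ} {P : ℤ}

theorem intCast_cofactor_sums_of_even_zero (hp0 : p 0 ≠ 0) (heven : Even (p 0))
    (hodd : ∀ j : Fin n, Odd (p j.succ)) (hP : P = ∏ j, p j)
    (hphat : ∀ j, p j * phat j = P) (hphat2 : ∀ i j, i ≠ j → p i * p j * phat2 i j = P) :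
    (P : ZMod 2) = 0 ∧ ∑ i, (phat i : ZMod 2) = 1 ∧
      ∑ i, ∑ j ∈ univ.filter (fun j => i < j), (phat2 i j : ZMod 2) = n := by
  have hp : ∀ j : Fin n, (p j.succ : ZMod 2) = 1 := fun j =>
    ZMod.intCast_eq_one_iff_odd.mpr (hodd j)
  have hP0 : (P : ZMod 2) = 0 := by
    rw [hP, Fin.prod_univ_succ, Int.cast_mul, ZMod.intCast_eq_zero_iff_even.mpr heven, zero_mul]
  have hphat0_eq : phat 0 = ∏ j : Fin n, p j.succ :=
    mul_left_cancel₀ hp0 (by rw [hphat, hP, Fin.prod_univ_succ])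
  have hphat0 : (phat 0 : ZMod 2) = 1 := by
    rw [hphat0_eq]; push_cast; exact prod_eq_one fun j _ => hp j
  have hphat_succ : ∀ j : Fin n, (phat j.succ : ZMod 2) = 0 := fun j =>
    (ZMod.intCast_eq_of_mul_eq (hp j) (hphat j.succ)).trans hP0
  have hphat2_zero : ∀ j : Fin n, (phat2 0 j.succ : ZMod 2) = 1 := by
    intro j
    refine (ZMod.intCast_eq_of_mul_eq (hp j) (mul_left_cancel₀ hp0 ?_)).trans hphat0
    rw [← mul_assoc, hphat2 0 j.succ (Fin.succ_ne_zero j).symm, hphat]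
  have hphat2_succ : ∀ i j : Fin n, i ≠ j → (phat2 i.succ j.succ : ZMod 2) = 0 := fun i j hij =>
    (ZMod.intCast_eq_of_mul_eq (by push_cast; rw [hp, hp, one_mul])
      (hphat2 i.succ j.succ (Fin.succ_injective _ |>.ne hij))).trans hP0
  refine ⟨hP0, by simp [Fin.sum_univ_succ, hphat0, hphat_succ], ?_⟩
  rw [Fin.sum_sum_filter_lt_succ]
  simp only [hphat2_zero, sum_const, card_univ, Fintype.card_fin, nsmul_eq_mul, mul_one]
  rw [sum_eq_zero fun i _ => sum_eq_zero fun j hj => hphat2_succ i j (mem_filter.mp hj).2.ne,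
    add_zero]

end CofactorParityOfEvenZero

theorem stmt_2_general (r : ℕ) (p : Fin r → ℤ)
    (hp : ∀ j, 0 < p j)
    (hodd : ∀ j : Fin r, (j : ℕ) ≠ 0 → Odd (p j))
    (P : ℤ) (hP : P = ∏ j, p j)
    (phat : Fin r → ℤ) (hphat : ∀ j, p j * phat j = P)
    (phat2 : Fin r → Fin r → ℤ)
    (hphat2 : ∀ i j : Fin r, i ≠ j → p i * p j * phat2 i j = P) :
    Odd (-((((r : ℤ) - 1) * ((r : ℤ) - 2)) / 2) * P
      + ((r : ℤ) - 2) * ∑ i, phat i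
      - ∑ i, ∑ j ∈ Finset.univ.filter (fun j => i < j), phat2 i j) := by
  rw [← ZMod.intCast_eq_one_iff_odd]
  push_cast
  by_cases hall : ∀ j, Odd (p j)
  · obtain ⟨hP1, hS1, hS2⟩ := intCast_cofactor_sums_of_forall_odd hall hP hphat hphat2
    rw [hP1, hS1, hS2, Fintype.card_fin]
    simpa using congrArg (Int.cast : ℤ → ZMod 2) (Int.neg_half_mul_add_sub_choose_two r)
  · obtain ⟨j₀, hj₀⟩ := not_forall.mp hall
    have hj₀_val : (j₀ : ℕ) = 0 := by_contra fun h => hj₀ (hodd j₀ h)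
    obtain ⟨n, rfl⟩ : ∃ n, r = n + 1 := Nat.exists_eq_add_one.mpr (Fin.pos j₀)
    obtain rfl : j₀ = 0 := Fin.ext hj₀_val
    obtain ⟨hP0, hS1, hS2⟩ := intCast_cofactor_sums_of_even_zero (hp 0).ne'
      (Int.not_odd_iff_even.mp hj₀) (fun j => hodd j.succ (Nat.succ_ne_zero j)) hP hphat hphat2
    rw [hP0, hS1, hS2]
    push_cast
    ring_nf
    decide

/-- Assume `p₂,…,p_r` are odd (here indexed by `j ≠ 0`). Then the integer
`-((r-1)(r-2)/2)·P + (r-2)·Σ_i P/p_i - Σ_{i<j} P/(p_i p_j)` is odd. -/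
theorem stmt_2 (r : ℕ) (hr : 3 ≤ r) (p : Fin r → ℤ)
    (hp : ∀ j, 0 < p j)
    (hcop : ∀ i j : Fin r, i ≠ j → IsCoprime (p i) (p j))
    (hodd : ∀ j : Fin r, (j : ℕ) ≠ 0 → Odd (p j))
    (P : ℤ) (hP : P = ∏ j, p j)
    (phat : Fin r → ℤ) (hphat : ∀ j, p j * phat j = P)
    (phat2 : Fin r → Fin r → ℤ)
    (hphat2 : ∀ i j : Fin r, i ≠ j → p i * p j * phat2 i j = P) :
    Odd (-((((r : ℤ) - 1) * ((r : ℤ) - 2)) / 2) * P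
      + ((r : ℤ) - 2) * ∑ i, phat i
      - ∑ i, ∑ j ∈ Finset.univ.filter (fun j => i < j), phat2 i j) :=
  stmt_2_general r p hp hodd P hP phat hphat phat2 hphat2
end

section
/- Let r ≥ 3, p₁,…,p_r pairwise coprime positive integers, P = p₁⋯p_r. Define the set 𝔖 = rP + N*(E) + 2Pℤ ⊂ ℤ, where E = {±1}^r and N*(ε) = Σ_j ε_j P/p_j. Define χ : ℤ → ℤ by χ(m) = ((ℓ+1)⋯(ℓ+r-3)/(r-3)!)·ε₁⋯ε_r when m ∈ 𝔖, where ε = ε(m) ∈ E is the unique sign vector with m ≡ rP + N*(ε) mod 2P and ℓ = (m - (r-2)P - N*(ε))/(2P); and χ(m) = 0 otherwise. Then ℓ is always an integer, and χ is an odd function, i.e., χ(-m) = -χ(m) for all m ∈ ℤ. -/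
/-!
Replacing `m` by `-m` and `ε` by `-ε` preserves the congruence `m ≡ rP + N*(ε) (mod 2P)`,
because `2rP ≡ 0`, and sends `ℓ` to `-ℓ - (r - 2)`. This reflection reverses the factors of
`(ℓ + 1)⋯(ℓ + r - 3)` up to sign, contributing `(-1)^(r-3)`, while `ε₁⋯ε_r` picks up `(-1)^r`;
the total sign is `-1`.
-/

open Finset

theorem prod_range_neg_sub_add_one {R : Type*} [CommRing R] (n : ℕ) (x : R) :
    ∏ i ∈ range n, (-x - (n + 1) + i + 1) = (-1) ^ n * ∏ i ∈ range n, (x + i + 1) := by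
  calc ∏ i ∈ range n, (-x - (n + 1) + i + 1)
      = ∏ i ∈ range n, -(x + ↑(n - 1 - i) + 1) := prod_congr rfl fun i hi => by
        rw [mem_range] at hi
        rw [Nat.cast_sub (by omega), Nat.cast_sub (by omega)]
        ring
    _ = (-1) ^ n * ∏ i ∈ range n, (x + i + 1) := by
      rw [prod_neg, card_range, prod_range_reflect (fun i : ℕ => x + i + 1)]

section Coset

variable {P m s : ℤ} (r : ℤ)

theorem dvd_sub_sub_two_mul (h : 2 * P ∣ m - (r * P + s)) : 2 * P ∣ m - ((r - 2) * P + s) := by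
  have : m - ((r - 2) * P + s) = m - (r * P + s) + 2 * P := by ring
  exact this ▸ dvd_add h dvd_rfl

theorem dvd_neg_sub_neg (h : 2 * P ∣ m - (r * P + s)) : 2 * P ∣ -m - (r * P + -s) := by
  have : -m - (r * P + -s) = -(m - (r * P + s)) - r * (2 * P) := by ring
  exact this ▸ dvd_sub h.neg_right (dvd_mul_left _ _)

theorem ediv_neg_sub_neg (hP : P ≠ 0) (h : 2 * P ∣ m - (r * P + s)) :
    (-m - ((r - 2) * P + -s)) / (2 * P) = -((m - ((r - 2) * P + s)) / (2 * P)) - (r - 2) := by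
  have hℓ := Int.ediv_mul_cancel (dvd_sub_sub_two_mul r h)
  exact Int.ediv_eq_of_eq_mul_left (by positivity) (by linear_combination hℓ)

end Coset

theorem sum_neg_mul {ι : Type*} [Fintype ι] (ε c : ι → ℤ) :
    ∑ j, -ε j * c j = -∑ j, ε j * c j := by
  simp [sum_neg_distrib]

theorem prod_range_div_factorial_reflect (n : ℕ) (x σ : ℚ) :
    (∏ i ∈ range n, (-x - (n + 1) + i + 1)) / n.factorial * ((-1) ^ (n + 3) * σ) =
      -((∏ i ∈ range n, (x + i + 1)) / n.factorial * σ) := by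
  have hsq : ((-1 : ℚ)) ^ n * (-1) ^ n = 1 := by rw [← mul_pow]; norm_num
  rw [prod_range_neg_sub_add_one]
  linear_combination (-(∏ i ∈ range n, (x + i + 1)) / n.factorial * σ) * hsq

theorem stmt_7_general (r : ℕ) (hr : 3 ≤ r) (p : Fin r → ℤ)
    (hp : ∀ j, 0 < p j)
    (P : ℤ) (hP : P = ∏ j, p j)
    (phat : Fin r → ℤ)
    (χ : ℤ → ℚ)
    (hval : ∀ (m : ℤ) (ε : Fin r → ℤ), (∀ j, ε j = 1 ∨ ε j = -1) →
      2 * P ∣ m - ((r : ℤ) * P + ∑ j, ε j * phat j) →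
      χ m = ((∏ i ∈ Finset.range (r - 3),
            ((((m - (((r : ℤ) - 2) * P + ∑ j, ε j * phat j)) / (2 * P) : ℤ) : ℚ)
              + (i : ℚ) + 1)) / (Nat.factorial (r - 3) : ℚ))
          * ∏ j, (ε j : ℚ))
    (hzero : ∀ m : ℤ,
      (¬ ∃ ε : Fin r → ℤ, (∀ j, ε j = 1 ∨ ε j = -1) ∧
        2 * P ∣ m - ((r : ℤ) * P + ∑ j, ε j * phat j)) → χ m = 0) :
    (∀ (m : ℤ) (ε : Fin r → ℤ), (∀ j, ε j = 1 ∨ ε j = -1) →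
      2 * P ∣ m - ((r : ℤ) * P + ∑ j, ε j * phat j) →
      2 * P ∣ m - (((r : ℤ) - 2) * P + ∑ j, ε j * phat j)) ∧
    (∀ m : ℤ, χ (-m) = -χ m) := by
  have hP0 : P ≠ 0 := hP ▸ (prod_pos fun j _ => hp j).ne'
  have hneg : ∀ {m : ℤ} {ε : Fin r → ℤ}, (∀ j, ε j = 1 ∨ ε j = -1) →
      2 * P ∣ m - ((r : ℤ) * P + ∑ j, ε j * phat j) →
      (∀ j, -ε j = 1 ∨ -ε j = -1) ∧ 2 * P ∣ -m - ((r : ℤ) * P + ∑ j, -ε j * phat j) :=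
    fun {_} {ε} hε h => ⟨fun j => by have := hε j; omega, sum_neg_mul ε phat ▸ dvd_neg_sub_neg r h⟩
  refine ⟨fun m ε _ h => dvd_sub_sub_two_mul r h, fun m => ?_⟩
  by_cases hm : ∃ ε : Fin r → ℤ, (∀ j, ε j = 1 ∨ ε j = -1) ∧
      2 * P ∣ m - ((r : ℤ) * P + ∑ j, ε j * phat j)
  · obtain ⟨ε, hε, hdvd⟩ := hm
    obtain ⟨hε', hdvd'⟩ := hneg hε hdvd
    rw [hval m ε hε hdvd, hval (-m) (fun j => -ε j) hε' hdvd', sum_neg_mul,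
      ediv_neg_sub_neg r hP0 hdvd]
    obtain ⟨n, rfl⟩ : ∃ n, r = n + 3 := ⟨r - 3, by omega⟩
    push_cast
    rw [show (n : ℚ) + 3 - 2 = n + 1 by ring, prod_neg, card_univ, Fintype.card_fin]
    exact prod_range_div_factorial_reflect n _ _
  · have hm' : ¬ ∃ ε : Fin r → ℤ, (∀ j, ε j = 1 ∨ ε j = -1) ∧
        2 * P ∣ -m - ((r : ℤ) * P + ∑ j, ε j * phat j) := by
      rintro ⟨ε, hε, hdvd⟩
      obtain ⟨hε', hdvd'⟩ := hneg hε hdvd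
      exact hm ⟨_, hε', neg_neg m ▸ hdvd'⟩
    rw [hzero m hm, hzero (-m) hm', neg_zero]

/-- Let `𝔖 = rP + N*(E) + 2Pℤ` and let `χ : ℤ → ℚ` equal
`((ℓ+1)⋯(ℓ+r-3)/(r-3)!)·ε₁⋯ε_r` on `𝔖` (with `ε = ε(m)` the sign vector such
that `m ≡ rP + N*(ε) mod 2P` and `ℓ = (m - (r-2)P - N*(ε))/(2P)`), and `0` off
`𝔖`. Then `ℓ` is always an integer (the displayed divisibility), and `χ` is odd. -/
theorem stmt_7 (r : ℕ) (hr : 3 ≤ r) (p : Fin r → ℤ)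
    (hp : ∀ j, 0 < p j)
    (hcop : ∀ i j : Fin r, i ≠ j → IsCoprime (p i) (p j))
    (P : ℤ) (hP : P = ∏ j, p j)
    (phat : Fin r → ℤ) (hphat : ∀ j, p j * phat j = P)
    (χ : ℤ → ℚ)
    (hval : ∀ (m : ℤ) (ε : Fin r → ℤ), (∀ j, ε j = 1 ∨ ε j = -1) →
      2 * P ∣ m - ((r : ℤ) * P + ∑ j, ε j * phat j) →
      χ m = ((∏ i ∈ Finset.range (r - 3),
            ((((m - (((r : ℤ) - 2) * P + ∑ j, ε j * phat j)) / (2 * P) : ℤ) : ℚ)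
              + (i : ℚ) + 1)) / (Nat.factorial (r - 3) : ℚ))
          * ∏ j, (ε j : ℚ))
    (hzero : ∀ m : ℤ,
      (¬ ∃ ε : Fin r → ℤ, (∀ j, ε j = 1 ∨ ε j = -1) ∧
        2 * P ∣ m - ((r : ℤ) * P + ∑ j, ε j * phat j)) → χ m = 0) :
    (∀ (m : ℤ) (ε : Fin r → ℤ), (∀ j, ε j = 1 ∨ ε j = -1) →
      2 * P ∣ m - ((r : ℤ) * P + ∑ j, ε j * phat j) →
      2 * P ∣ m - (((r : ℤ) - 2) * P + ∑ j, ε j * phat j)) ∧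
    (∀ m : ℤ, χ (-m) = -χ m) :=
  stmt_7_general r hr p hp P hP phat χ hval hzero
end

section
/- With notation as in the Hikami set definition, if ℓ, ℓ' ∈ 𝔏 are distinct elements of the set 𝔏(p₁,…,p_r) (i.e., 0 ≤ ℓ_j ≤ p_j, ℓ_j/p_j ∉ ℤ for at least three j, ℓ_j even for j ≥ 2), then the Hikami sets 𝔖^ℓ = N^ℓ(E) + 2Pℤ and 𝔖^{ℓ'} = N^{ℓ'}(E) + 2Pℤ are disjoint. -/
/-!
Subtracting the two representatives, `2P` divides `∑ⱼ cⱼ · P/pⱼ` with `cⱼ = ε'ⱼ ℓ'ⱼ - εⱼ ℓⱼ`.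
Modulo `pⱼ` every term but the `j`-th vanishes and `P/pⱼ` is a unit, so `pⱼ ∣ cⱼ`; for `j ≥ 1`
also `2 ∣ cⱼ` since `ℓⱼ, ℓ'ⱼ` are even, while for `j = 0` the other terms are even and `P/p₀` is
odd. Either way `2pⱼ ∣ cⱼ = ±(ℓ'ⱼ ∓ ℓⱼ)`, which for `0 ≤ ℓⱼ, ℓ'ⱼ ≤ pⱼ` forces `ℓⱼ = ℓ'ⱼ`.
-/

open Finset

theorem eq_of_two_mul_dvd_sign_mul_sub {q a b ε ε' : ℤ} (ha : 0 ≤ a ∧ a ≤ q) (hb : 0 ≤ b ∧ b ≤ q)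
    (hε : ε = 1 ∨ ε = -1) (hε' : ε' = 1 ∨ ε' = -1) (h : 2 * q ∣ ε' * b - ε * a) : a = b := by
  obtain ⟨k, hk⟩ := h
  rcases hε with rfl | rfl <;> rcases hε' with rfl | rfl <;>
    rcases lt_trichotomy k 0 with hk0 | rfl | hk0 <;> nlinarith

theorem dvd_of_dvd_sum_of_dvd_of_ne {ι R : Type*} [CommRing R] [DecidableEq ι] {s : Finset ι}
    {f : ι → R} {m : R} {j : ι} (hj : j ∈ s) (hsum : m ∣ ∑ i ∈ s, f i)
    (hother : ∀ i ∈ s, i ≠ j → m ∣ f i) : m ∣ f j := by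
  rw [← add_sum_erase s f hj] at hsum
  exact (dvd_add_left (dvd_sum fun i hi =>
    hother i (mem_of_mem_erase hi) (ne_of_mem_erase hi))).mp hsum

theorem mul_dvd_of_dvd_sum_mul_prod_erase {ι R : Type*} [Fintype ι] [DecidableEq ι] [CommRing R]
    {p c : ι → R} {d : R} (hcop : ∀ i j, i ≠ j → IsCoprime (p i) (p j)) (j : ι)
    (hd : IsCoprime d (∏ i ∈ univ.erase j, p i)) (hdc : ∀ i, i ≠ j → d ∣ c i)
    (h : d * ∏ i, p i ∣ ∑ i, c i * ∏ k ∈ univ.erase i, p k) : d * p j ∣ c j := by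
  have hcofactor : IsCoprime (d * p j) (∏ i ∈ univ.erase j, p i) :=
    hd.mul_left (IsCoprime.prod_right fun i hi => hcop j i (ne_of_mem_erase hi).symm)
  refine hcofactor.dvd_of_dvd_mul_right
    (dvd_of_dvd_sum_of_dvd_of_ne (f := fun i => c i * ∏ k ∈ univ.erase i, p k) (mem_univ j) ?_ ?_)
  · exact (mul_dvd_mul_left d (dvd_prod_of_mem p (mem_univ j))).trans h
  · intro i _ hij
    exact mul_dvd_mul (hdc i hij) (dvd_prod_of_mem p (mem_erase.mpr ⟨hij.symm, mem_univ j⟩))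

theorem eq_prod_erase_of_mul_eq_prod {ι R : Type*} [Fintype ι] [DecidableEq ι] [CommRing R]
    [IsDomain R] {p : ι → R} {j : ι} {q : R} (hp : p j ≠ 0) (h : p j * q = ∏ i, p i) :
    q = ∏ i ∈ univ.erase j, p i :=
  mul_left_cancel₀ hp (h.trans (mul_prod_erase univ p (mem_univ j)).symm)

theorem stmt_9_general (r : ℕ) (p : Fin r → ℤ)
    (hp : ∀ j, 0 < p j)
    (hcop : ∀ i j : Fin r, i ≠ j → IsCoprime (p i) (p j))
    (hodd : ∀ j : Fin r, (j : ℕ) ≠ 0 → Odd (p j))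
    (P : ℤ) (hP : P = ∏ j, p j)
    (phat : Fin r → ℤ) (hphat : ∀ j, p j * phat j = P)
    (ℓ ℓ' : Fin r → ℤ)
    (hℓ₁ : ∀ j, 0 ≤ ℓ j ∧ ℓ j ≤ p j)
    (hℓ₃ : ∀ j : Fin r, (j : ℕ) ≠ 0 → 2 ∣ ℓ j)
    (hℓ'₁ : ∀ j, 0 ≤ ℓ' j ∧ ℓ' j ≤ p j)
    (hℓ'₃ : ∀ j : Fin r, (j : ℕ) ≠ 0 → 2 ∣ ℓ' j)
    (hne : ℓ ≠ ℓ')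
    (ε ε' : Fin r → ℤ)
    (hε : ∀ j, ε j = 1 ∨ ε j = -1) (hε' : ∀ j, ε' j = 1 ∨ ε' j = -1) :
    ¬ ((P + ∑ j, ε j * ℓ j * phat j)
        ≡ (P + ∑ j, ε' j * ℓ' j * phat j) [ZMOD 2 * P]) := by
  intro h
  obtain rfl : phat = fun j => ∏ i ∈ univ.erase j, p i :=
    funext fun j => eq_prod_erase_of_mul_eq_prod (hp j).ne' ((hphat j).trans hP)
  subst hP
  set c : Fin r → ℤ := fun j => ε' j * ℓ' j - ε j * ℓ j
  have hsum : 2 * ∏ i, p i ∣ ∑ j, c j * ∏ i ∈ univ.erase j, p i := by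
    convert h.dvd using 1
    simp only [c, sub_mul, sum_sub_distrib]
    ring
  have hc_even : ∀ j : Fin r, (j : ℕ) ≠ 0 → 2 ∣ c j := fun j hj =>
    dvd_sub ((hℓ'₃ j hj).mul_left _) ((hℓ₃ j hj).mul_left _)
  refine hne (funext fun j => eq_of_two_mul_dvd_sign_mul_sub (hℓ₁ j) (hℓ'₁ j) (hε j) (hε' j) ?_)
  by_cases hj : (j : ℕ) = 0
  · have hne_j : ∀ i, i ≠ j → (i : ℕ) ≠ 0 := fun i hij h0 => hij (Fin.ext (h0.trans hj.symm))
    refine mul_dvd_of_dvd_sum_mul_prod_erase hcop j ?_ (fun i hij => hc_even i (hne_j i hij)) hsum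
    exact IsCoprime.prod_right fun i hi =>
      Int.isCoprime_two_left.mpr (hodd i (hne_j i (ne_of_mem_erase hi)))
  · have hpc : p j ∣ c j := by
      simpa using mul_dvd_of_dvd_sum_mul_prod_erase (d := 1) hcop j isCoprime_one_left
        (fun _ _ => one_dvd _) (by simpa using (dvd_mul_left _ 2).trans hsum)
    exact (Int.isCoprime_two_left.mpr (hodd j hj)).mul_dvd (hc_even j hj) hpc

/-- If `ℓ ≠ ℓ'` are distinct elements of `𝔏(p₁,…,p_r)` (that is, `0 ≤ ℓ_j ≤ p_j`,
`p_j ∤ ℓ_j` for at least three `j`, `ℓ_j` even for `j ≥ 2`), then the Hikami sets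
`𝔖^ℓ = N^ℓ(E) + 2Pℤ` and `𝔖^{ℓ'} = N^{ℓ'}(E) + 2Pℤ` are disjoint. -/
theorem stmt_9 (r : ℕ) (hr : 3 ≤ r) (p : Fin r → ℤ)
    (hp : ∀ j, 0 < p j)
    (hcop : ∀ i j : Fin r, i ≠ j → IsCoprime (p i) (p j))
    (hodd : ∀ j : Fin r, (j : ℕ) ≠ 0 → Odd (p j))
    (P : ℤ) (hP : P = ∏ j, p j)
    (phat : Fin r → ℤ) (hphat : ∀ j, p j * phat j = P)
    (ℓ ℓ' : Fin r → ℤ)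
    (hℓ₁ : ∀ j, 0 ≤ ℓ j ∧ ℓ j ≤ p j)
    (hℓ₂ : 3 ≤ Set.ncard {j : Fin r | ¬ p j ∣ ℓ j})
    (hℓ₃ : ∀ j : Fin r, (j : ℕ) ≠ 0 → 2 ∣ ℓ j)
    (hℓ'₁ : ∀ j, 0 ≤ ℓ' j ∧ ℓ' j ≤ p j)
    (hℓ'₂ : 3 ≤ Set.ncard {j : Fin r | ¬ p j ∣ ℓ' j})
    (hℓ'₃ : ∀ j : Fin r, (j : ℕ) ≠ 0 → 2 ∣ ℓ' j)
    (hne : ℓ ≠ ℓ')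
    (ε ε' : Fin r → ℤ)
    (hε : ∀ j, ε j = 1 ∨ ε j = -1) (hε' : ∀ j, ε' j = 1 ∨ ε' j = -1) :
    ¬ ((P + ∑ j, ε j * ℓ j * phat j)
        ≡ (P + ∑ j, ε' j * ℓ' j * phat j) [ZMOD 2 * P]) :=
  stmt_9_general r p hp hcop hodd P hP phat hphat ℓ ℓ' hℓ₁ hℓ₃ hℓ'₁ hℓ'₃ hne ε ε' hε hε'
end

section
/- Let h ∈ 𝔥 with t_h = 0 (no coordinate h_j is a multiple of p_j), and let s ≥ 0 with s < r. Then the 2P-periodic function m^s f^h : ℤ → ℤ, defined to be -ε₁⋯ε_r·(Σ_j ε_j h_j p̂_j)^s at n ≡ P + Σ_j ε_j h_j p̂_j (mod 2P) and 0 off the Hikami set 𝔖^h, has zero mean value: Σ_{n=1}^{2P} m^s f^h(n) = 0. -/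
/-!
Because the `p_j` are pairwise coprime and no `p_j` divides `h_j`, the points
`P + Σ_j ε_j h_j p̂_j` for the `2^r` sign vectors `ε` are pairwise incongruent mod `2P`, so the sum
over a period is `-Σ_ε ε₁⋯ε_r (Σ_j ε_j h_j p̂_j)^s`. Expanding the `s`-th power, every monomial
misses some `ε_j` since `s < r`, and summing over that sign kills it.
-/

open Finset Function

def signVectors (ι : Type*) [Fintype ι] [DecidableEq ι] : Finset (ι → ℤ) :=
  Fintype.piFinset fun _ => {1, -1}

section Signs

variable {ι : Type*} [Fintype ι] [DecidableEq ι]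

theorem mem_signVectors {ε : ι → ℤ} : ε ∈ signVectors ι ↔ ∀ j, ε j = 1 ∨ ε j = -1 := by
  simp [signVectors]

theorem sum_signVectors_prod_pow_eq_zero (k : ι → ℕ) {j₀ : ι} (hj₀ : Odd (k j₀)) :
    ∑ ε ∈ signVectors ι, ∏ j, ε j ^ k j = 0 := by
  rw [signVectors, sum_prod_piFinset _ fun j x => x ^ k j]
  exact prod_eq_zero (mem_univ j₀) (by simp [hj₀.neg_one_pow])

theorem prod_comp_eq_prod_pow_card {s : ℕ} (ε : ι → ℤ) (f : Fin s → ι) :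
    ∏ i, ε (f i) = ∏ j, ε j ^ #{i | f i = j} := by
  rw [← prod_fiberwise univ f]
  exact prod_congr rfl fun j _ => prod_eq_pow_card fun i hi => by rw [(mem_filter.mp hi).2]

theorem sum_signVectors_prod_mul_sum_pow_eq_zero (c : ι → ℤ) {s : ℕ} (hs : s < Fintype.card ι) :
    ∑ ε ∈ signVectors ι, (∏ j, ε j) * (∑ j, ε j * c j) ^ s = 0 := by
  simp only [Fintype.sum_pow, mul_sum]
  rw [sum_comm]
  refine sum_eq_zero fun f _ => ?_
  obtain ⟨j₀, hj₀⟩ : ∃ j₀, ∀ i, f i ≠ j₀ := by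
    by_contra! hsurj
    have := Fintype.card_le_of_surjective f hsurj
    rw [Fintype.card_fin] at this
    omega
  have hterm : ∀ ε : ι → ℤ, (∏ j, ε j) * ∏ i, ε (f i) * c (f i)
      = (∏ i, c (f i)) * ∏ j, ε j ^ (#{i | f i = j} + 1) := by
    intro ε
    simp only [prod_mul_distrib, pow_succ, prod_comp_eq_prod_pow_card ε f]
    ring
  simp only [hterm, ← mul_sum]
  refine mul_eq_zero_of_right _ (sum_signVectors_prod_pow_eq_zero _ (j₀ := j₀) ?_)
  simp [filter_eq_empty_iff.mpr fun i _ => hj₀ i]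

end Signs

theorem Int.eq_of_mem_Icc_of_dvd_sub {N a b : ℤ} (ha : a ∈ Icc 1 N) (hb : b ∈ Icc 1 N)
    (hab : N ∣ a - b) : a = b := by
  rw [mem_Icc] at ha hb
  have := Int.eq_zero_of_abs_lt_dvd hab (abs_sub_lt_iff.mpr ⟨by omega, by omega⟩)
  omega

theorem Int.exists_mem_Icc_dvd_sub {N : ℤ} (hN : 0 < N) (n : ℤ) : ∃ m ∈ Icc 1 N, N ∣ m - n := by
  refine ⟨(n - 1) % N + 1, ?_, ?_⟩
  · have := Int.emod_nonneg (n - 1) hN.ne'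
    have := Int.emod_lt_of_pos (n - 1) hN
    rw [mem_Icc]; omega
  · have := Int.emod_add_mul_ediv (n - 1) N
    exact ⟨-((n - 1) / N), by linear_combination this⟩

theorem sum_Icc_eq_sum_of_dvd_sub {ι M : Type*} [AddCommMonoid M] {N : ℤ} (hN : 0 < N)
    (E : Finset ι) (e : ι → ℤ) (he : ∀ a ∈ E, ∀ b ∈ E, N ∣ e a - e b → a = b)
    (F : ℤ → M) (g : ι → M) (hF : ∀ n, ∀ a ∈ E, N ∣ n - e a → F n = g a)
    (hF₀ : ∀ n, (∀ a ∈ E, ¬ N ∣ n - e a) → F n = 0) :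
    ∑ n ∈ Icc 1 N, F n = ∑ a ∈ E, g a := by
  classical
  choose rep hrep_mem hrep_dvd using Int.exists_mem_Icc_dvd_sub hN
  have hrep_inj : Set.InjOn (rep ∘ e) E := fun a ha b hb hab =>
    he a ha b hb <| by
      have hab : rep (e a) = rep (e b) := hab
      have := dvd_sub (hrep_dvd (e b)) (hrep_dvd (e a))
      rwa [hab, sub_sub_sub_cancel_left] at this
  calc ∑ n ∈ Icc 1 N, F n
      = ∑ n ∈ E.image (rep ∘ e), F n := by
        refine (sum_subset (fun n hn => ?_) fun n hn hnE => hF₀ n fun a ha hdvd => hnE ?_).symm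
        · obtain ⟨a, -, rfl⟩ := mem_image.mp hn
          exact hrep_mem _
        · refine mem_image.mpr ⟨a, ha, Int.eq_of_mem_Icc_of_dvd_sub (hrep_mem _) hn ?_⟩
          simpa only [comp_apply, sub_sub_sub_cancel_right] using
            dvd_sub (hrep_dvd (e a)) hdvd
    _ = ∑ a ∈ E, F (rep (e a)) := sum_image hrep_inj
    _ = ∑ a ∈ E, g a := sum_congr rfl fun a ha => hF _ a ha (hrep_dvd _)

theorem dvd_of_prod_dvd_sum_mul_prod_erase {R ι : Type*} [CommRing R] [Fintype ι] [DecidableEq ι]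
    {p : ι → R} (hp : Pairwise (IsCoprime on p)) {d : ι → R}
    (hd : ∏ j, p j ∣ ∑ j, d j * ∏ i ∈ univ.erase j, p i) (k : ι) : p k ∣ d k := by
  have hk := (dvd_prod_of_mem p (mem_univ k)).trans hd
  rw [← add_sum_erase _ _ (mem_univ k)] at hk
  have hrest : p k ∣ ∑ j ∈ univ.erase k, d j * ∏ i ∈ univ.erase j, p i :=
    dvd_sum fun j hj =>
      (dvd_prod_of_mem p (mem_erase.mpr ⟨(ne_of_mem_erase hj).symm, mem_univ k⟩)).mul_left _
  have hcop : IsCoprime (p k) (∏ i ∈ univ.erase k, p i) :=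
    IsCoprime.prod_right fun i hi => hp (ne_of_mem_erase hi).symm
  exact hcop.dvd_of_dvd_mul_right ((dvd_add_left hrest).mp hk)

/-- Two sign vectors `ε ≠ ε'` differ by twice a vector `d` with `d k = ±1` wherever they differ,
so a congruence of the two sums mod `2 ∏ p` would force `p k ∣ h k`. -/
theorem eq_of_two_mul_prod_dvd_sub {ι : Type*} [Fintype ι] [DecidableEq ι] {p h : ι → ℤ}
    (hp : Pairwise (IsCoprime on p)) (hh : ∀ j, ¬ p j ∣ h j) {ε ε' : ι → ℤ}
    (hε : ε ∈ signVectors ι) (hε' : ε' ∈ signVectors ι)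
    (hdvd : 2 * ∏ j, p j ∣
      ∑ j, ε j * h j * ∏ i ∈ univ.erase j, p i - ∑ j, ε' j * h j * ∏ i ∈ univ.erase j, p i) :
    ε = ε' := by
  rw [mem_signVectors] at hε hε'
  set d : ι → ℤ := fun j => (ε j - ε' j) / 2
  have hd : ∀ j, ε j - ε' j = 2 * d j := fun j => by
    rcases hε j with h₁ | h₁ <;> rcases hε' j with h₂ | h₂ <;> simp [d, h₁, h₂]
  have hdiff : ∑ j, ε j * h j * ∏ i ∈ univ.erase j, p i - ∑ j, ε' j * h j * ∏ i ∈ univ.erase j, p i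
      = 2 * ∑ j, d j * h j * ∏ i ∈ univ.erase j, p i := by
    rw [← sum_sub_distrib, mul_sum]
    exact sum_congr rfl fun j _ => by rw [← sub_mul, ← sub_mul, hd]; ring
  have hsum : ∏ j, p j ∣ ∑ j, d j * h j * ∏ i ∈ univ.erase j, p i :=
    (mul_dvd_mul_iff_left two_ne_zero).mp (hdiff ▸ hdvd)
  funext k
  by_contra hne
  have hk := dvd_of_prod_dvd_sum_mul_prod_erase hp hsum k
  apply hh k
  rcases hε k with h₁ | h₁ <;> rcases hε' k with h₂ | h₂
  · exact absurd (h₁.trans h₂.symm) hne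
  · simpa [d, h₁, h₂] using hk
  · simpa [d, h₁, h₂] using hk
  · exact absurd (h₁.trans h₂.symm) hne

theorem stmt_11_general (r : ℕ) (p : Fin r → ℤ)
    (hp : ∀ j, 0 < p j)
    (hcop : ∀ i j : Fin r, i ≠ j → IsCoprime (p i) (p j))
    (P : ℤ) (hP : P = ∏ j, p j)
    (phat : Fin r → ℤ) (hphat : ∀ j, p j * phat j = P)
    (h : Fin r → ℤ)
    (ht : ∀ j, ¬ p j ∣ h j)
    (s : ℕ) (hs : s < r)
    (F : ℤ → ℤ)
    (hFval : ∀ (n : ℤ) (ε : Fin r → ℤ), (∀ j, ε j = 1 ∨ ε j = -1) →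
      2 * P ∣ n - (P + ∑ j, ε j * h j * phat j) →
      F n = -(∏ j, ε j) * (∑ j, ε j * h j * phat j) ^ s)
    (hFzero : ∀ n : ℤ,
      (¬ ∃ ε : Fin r → ℤ, (∀ j, ε j = 1 ∨ ε j = -1) ∧
        2 * P ∣ n - (P + ∑ j, ε j * h j * phat j)) → F n = 0) :
    ∑ n ∈ Finset.Icc (1 : ℤ) (2 * P), F n = 0 := by
  have hphat_eq : phat = fun j => ∏ i ∈ univ.erase j, p i := funext fun j =>
    mul_left_cancel₀ (hp j).ne' (by rw [hphat, hP, mul_prod_erase _ _ (mem_univ j)])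
  subst hP hphat_eq
  rw [sum_Icc_eq_sum_of_dvd_sub (mul_pos two_pos (prod_pos fun j _ => hp j)) (signVectors (Fin r))
    _ (fun a ha b hb hab => eq_of_two_mul_prod_dvd_sub hcop ht ha hb (by simpa using hab)) F _
    (fun n ε hε => hFval n ε (mem_signVectors.mp hε))
    (fun n hn => hFzero n fun ⟨ε, hε, hdvd⟩ => hn ε (mem_signVectors.mpr hε) hdvd)]
  simp only [neg_mul, sum_neg_distrib, mul_assoc, neg_eq_zero]
  exact sum_signVectors_prod_mul_sum_pow_eq_zero _ (by simpa using hs)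

/-- Let `h ∈ 𝔥` with `t_h = 0` (no `h_j` is a multiple of `p_j`) and `0 ≤ s < r`.
The `2P`-periodic `s`-Hikami function `m^s f^h : ℤ → ℤ`, equal to
`-ε₁⋯ε_r·(Σ_j ε_j h_j p̂_j)^s` at `n ≡ P + Σ_j ε_j h_j p̂_j (mod 2P)` and `0`
off the Hikami set `𝔖^h`, has zero mean value. -/
theorem stmt_11 (r : ℕ) (hr : 3 ≤ r) (p : Fin r → ℤ)
    (hp : ∀ j, 0 < p j)
    (hcop : ∀ i j : Fin r, i ≠ j → IsCoprime (p i) (p j))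
    (P : ℤ) (hP : P = ∏ j, p j)
    (phat : Fin r → ℤ) (hphat : ∀ j, p j * phat j = P)
    (h : Fin r → ℤ)
    (hh₁ : ∀ j, 0 ≤ h j ∧ h j ≤ p j)
    (hh₂ : 3 ≤ Set.ncard {j : Fin r | ¬ p j ∣ h j})
    (ht : ∀ j, ¬ p j ∣ h j)
    (s : ℕ) (hs : s < r)
    (F : ℤ → ℤ)
    (hFval : ∀ (n : ℤ) (ε : Fin r → ℤ), (∀ j, ε j = 1 ∨ ε j = -1) →
      2 * P ∣ n - (P + ∑ j, ε j * h j * phat j) →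
      F n = -(∏ j, ε j) * (∑ j, ε j * h j * phat j) ^ s)
    (hFzero : ∀ n : ℤ,
      (¬ ∃ ε : Fin r → ℤ, (∀ j, ε j = 1 ∨ ε j = -1) ∧
        2 * P ∣ n - (P + ∑ j, ε j * h j * phat j)) → F n = 0) :
    ∑ n ∈ Finset.Icc (1 : ℤ) (2 * P), F n = 0 :=
  stmt_11_general r p hp hcop P hP phat hphat h ht s hs F hFval hFzero
end

section
/- Generating identity for s-Hikami functions: with h ∈ 𝔥, t_h = 0, the finitely supported function m^s f^h on the set of representatives N^h(E) satisfies Σ_{n ∈ N^h(E)} m^s f^h(n) z^n = -z^P (z d/dz)^s ( ∏_{j=1}^r (z^{h_j p̂_j} - z^{-h_j p̂_j}) ) as an identity of Laurent polynomials in ℤ[z, z^{-1}]. -/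
/-!
With `a_j = h_j p̂_j`, each factor `z^{a_j} - z^{-a_j}` is `Σ_{ε_j = ±1} ε_j z^{ε_j a_j}`, so
the product expands into `Σ_{ε ∈ E} ε₁⋯ε_r z^{Σ ε_j a_j}`. Every monomial `z^n` is an eigenvector of `z d/dz` with
eigenvalue `n`, hence `(z d/dz)^s` multiplies the `ε`-term by `(Σ ε_j a_j)^s`; multiplying by
`-z^P` gives the left-hand side term by term.
-/

open LaurentPolynomial Finset

lemma AddMonoid.End.pow_apply_of_apply_eq_zsmul {M : Type*} [AddCommGroup M] (f : AddMonoid.End M)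
    {x : M} {n : ℤ} (hx : f x = n • x) (s : ℕ) : (f ^ s) x = n ^ s • x := by
  induction s with
  | zero => simp
  | succ s ih =>
    rw [pow_succ', AddMonoid.End.coe_mul, Function.comp_apply, ih, map_zsmul, hx, smul_smul,
      ← pow_succ]

namespace LaurentPolynomial

variable {R ι : Type*}

lemma prod_T [CommSemiring R] (t : Finset ι) (a : ι → ℤ) :
    ∏ j ∈ t, (T (a j) : R[T;T⁻¹]) = T (∑ j ∈ t, a j) := by
  induction t using Finset.cons_induction with
  | empty => simp
  | cons i t hi ih => rw [prod_cons, sum_cons, ih, T_add]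

lemma prod_T_sub_T_neg [CommRing R] [Fintype ι] [DecidableEq ι] (a : ι → ℤ) :
    ∏ j, (T (a j) - T (-a j) : R[T;T⁻¹]) =
      ∑ σ : ι → Bool, (∏ j, if σ j then (1 : R) else -1) •
        T (∑ j, (if σ j then (1 : ℤ) else -1) * a j) := by
  have expand (j : ι) : (T (a j) - T (-a j) : R[T;T⁻¹]) =
      ∑ b : Bool, (if b then (1 : R) else -1) • T ((if b then (1 : ℤ) else -1) * a j) := by
    simp [sub_eq_add_neg]
  simp_rw [expand, Fintype.prod_sum, Finset.prod_smul, prod_T]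

end LaurentPolynomial

theorem stmt_12_general (r : ℕ) (P : ℤ) (phat : Fin r → ℤ) (h : Fin r → ℤ) (s : ℕ)
    (D : LaurentPolynomial ℤ → LaurentPolynomial ℤ)
    (hDadd : ∀ f g : LaurentPolynomial ℤ, D (f + g) = D f + D g)
    (hDT : ∀ n : ℤ, D (T n) = n • T n) :
    (∑ σ : Fin r → Bool,
      C (-(∏ j, if σ j then (1 : ℤ) else -1)
          * (∑ j, (if σ j then (1 : ℤ) else -1) * h j * phat j) ^ s)
        * T (P + ∑ j, (if σ j then (1 : ℤ) else -1) * h j * phat j))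
    = -(T P * D^[s] (∏ j, (T (h j * phat j) - T (-(h j * phat j))))) := by
  let Dh : AddMonoid.End ℤ[T;T⁻¹] := AddMonoidHom.mk' D hDadd
  have eigen (n : ℤ) : (Dh ^ s) (T n) = n ^ s • T n := Dh.pow_apply_of_apply_eq_zsmul (hDT n) s
  change _ = -(T P * (Dh ^ s) _)
  rw [prod_T_sub_T_neg, map_sum, mul_sum, ← sum_neg_distrib]
  refine sum_congr rfl fun σ _ => ?_
  rw [map_zsmul, eigen]
  simp only [mul_assoc, T_add, smul_eq_C_mul, map_neg, map_mul]
  ring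

open LaurentPolynomial in
/-- Generating identity for `s`-Hikami functions: with `h ∈ 𝔥`, `t_h = 0`,
`Σ_{n ∈ N^h(E)} m^s f^h(n) z^n = -z^P (z d/dz)^s (∏_j (z^{h_j p̂_j} - z^{-h_j p̂_j}))`
in `ℤ[z, z⁻¹]`, where `D` denotes the (additive, monomial-scaling) operator
`z d/dz` and the sum over `N^h(E)` is parametrized by sign vectors. -/
theorem stmt_12 (r : ℕ) (hr : 3 ≤ r) (p : Fin r → ℤ)
    (hp : ∀ j, 0 < p j)
    (hcop : ∀ i j : Fin r, i ≠ j → IsCoprime (p i) (p j))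
    (P : ℤ) (hP : P = ∏ j, p j)
    (phat : Fin r → ℤ) (hphat : ∀ j, p j * phat j = P)
    (h : Fin r → ℤ)
    (hh₁ : ∀ j, 0 ≤ h j ∧ h j ≤ p j)
    (hh₂ : 3 ≤ Set.ncard {j : Fin r | ¬ p j ∣ h j})
    (ht : ∀ j, ¬ p j ∣ h j)
    (s : ℕ)
    (D : LaurentPolynomial ℤ → LaurentPolynomial ℤ)
    (hDadd : ∀ f g : LaurentPolynomial ℤ, D (f + g) = D f + D g)
    (hDT : ∀ n : ℤ, D (T n) = n • T n) :
    (∑ σ : Fin r → Bool,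
      C (-(∏ j, if σ j then (1 : ℤ) else -1)
          * (∑ j, (if σ j then (1 : ℤ) else -1) * h j * phat j) ^ s)
        * T (P + ∑ j, (if σ j then (1 : ℤ) else -1) * h j * phat j))
    = -(T P * D^[s] (∏ j, (T (h j * phat j) - T (-(h j * phat j))))) :=
  stmt_12_general r P phat h s D hDadd hDT
end

section
/- Vanishing of power moments: let h ∈ 𝔥 satisfy 0 < Σ_{j=1}^r h_j/p_j < 1, let J ⊂ {1,…,r} with J ∩ J^h = ∅ and |J| ≥ r - s for some 0 ≤ s ≤ r-3, and let g : ℤ → {-1,0,1} be the 2P-periodic generalized Hikami function g_J^h. Then Σ_{m=1}^{2P} m^a g(m) = 0 for every integer 0 ≤ a ≤ r - s - 1. -/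
/-!
Put `c_j = h_j p̂_j`; then `0 ≤ c_j`, `Σ_j c_j < P`, and `c_j = 0` exactly when `p_j ∣ h_j`.
The nodes `N(T) = P + Σ_j c_j - 2 Σ_{j ∈ T} c_j`, for `T` a set of indices with `p_j ∤ h_j`, lie
in `(0, 2P)` and are pairwise distinct (reduce modulo `p_j`: every `c_i` with `i ≠ j` is divisible
by `p_j`, while `c_j` is not). Hence `g` equals `(-1)^{|T ∩ J|}` at `N(T)` and vanishes at every
other point of `[1, 2P]`, and the moment is `Σ_T (-1)^{|T ∩ J|} N(T)^a`. This is `x ↦ x^a` acted on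
by one operator `Q ↦ Q ± Q(· - 2c_j)` per index; for `j ∈ J` it is the difference, which lowers the
degree, so the sum vanishes as soon as `a < |J|`.
-/

open Finset Polynomial

theorem Polynomial.degree_sub_taylor_lt {R : Type*} [CommRing R] {Q : R[X]} (hQ : Q ≠ 0) (r : R) :
    (Q - taylor r Q).degree < Q.degree :=
  degree_sub_lt_left (degree_taylor Q r).symm hQ (leadingCoeff_taylor r Q).symm

theorem Polynomial.sum_powerset_neg_one_pow_mul_eval_eq_zero {ι R : Type*} [DecidableEq ι]
    [CommRing R] (S K : Finset ι) (c : ι → R) (Q : R[X]) (hQ : Q.degree < #(K ∩ S)) (x : R) :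
    ∑ T ∈ K.powerset, (-1) ^ #(T ∩ S) * Q.eval (x + ∑ j ∈ T, c j) = 0 := by
  induction K using Finset.induction_on generalizing Q with
  | empty =>
    have hQ0 : Q = 0 := by simpa [zero_le_degree_iff] using hQ.not_ge
    simp [hQ0]
  | @insert j K hj ih =>
    set σ : R := if j ∈ S then -1 else 1
    have hsplit : ∑ T ∈ (insert j K).powerset, (-1) ^ #(T ∩ S) * Q.eval (x + ∑ i ∈ T, c i) =
        ∑ T ∈ K.powerset, (-1) ^ #(T ∩ S) * (Q + C σ * taylor (c j) Q).eval (x + ∑ i ∈ T, c i) := by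
      rw [sum_powerset_insert hj, ← sum_add_distrib]
      refine sum_congr rfl fun T hT => ?_
      have hjT : j ∉ T := fun h => hj (mem_powerset.1 hT h)
      by_cases hjS : j ∈ S
      · rw [insert_inter_of_mem hjS, card_insert_of_notMem (fun h => hjT (mem_inter.1 h).1),
          sum_insert hjT, add_comm (c j), ← add_assoc]
        simp only [σ, if_pos hjS, eval_add, eval_mul, eval_C, taylor_eval]
        ring
      · rw [insert_inter_of_notMem hjS, sum_insert hjT, add_comm (c j), ← add_assoc]
        simp only [σ, if_neg hjS, eval_add, eval_mul, eval_C, taylor_eval]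
        ring
    rw [hsplit]
    apply ih
    by_cases hjS : j ∈ S
    · have hcard : #(insert j K ∩ S) = #(K ∩ S) + 1 := by
        rw [insert_inter_of_mem hjS, card_insert_of_notMem (fun h => hj (mem_inter.1 h).1)]
      rw [hcard] at hQ
      simp only [σ, if_pos hjS, map_neg, map_one, neg_one_mul, ← sub_eq_add_neg]
      rcases eq_or_ne Q 0 with rfl | hQ0
      · simp
      · calc (Q - taylor (c j) Q).degree < Q.degree := degree_sub_taylor_lt hQ0 (c j)
          _ = Q.natDegree := degree_eq_natDegree hQ0
          _ ≤ #(K ∩ S) := by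
            exact_mod_cast Nat.lt_succ_iff.mp ((natDegree_lt_iff_degree_lt hQ0).2 hQ)
    · rw [insert_inter_of_notMem hjS] at hQ
      simp only [σ, if_neg hjS, map_one, one_mul]
      exact (degree_add_le _ _).trans_lt (by rw [degree_taylor, max_self]; exact hQ)

theorem Finset.injOn_sum_powerset_of_dvd {ι R : Type*} [DecidableEq ι] [CommRing R]
    (m c : ι → R) (D : Finset ι) (hdvd : ∀ i j, i ≠ j → m i ∣ c j)
    (hndvd : ∀ j ∈ D, ¬ m j ∣ c j) :
    Set.InjOn (fun T => ∑ j ∈ T, c j) D.powerset := by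
  have hmod : ∀ i T, m i ∣ ∑ j ∈ T, c j - if i ∈ T then c i else 0 := by
    intro i T
    rw [← sum_ite_eq', ← sum_sub_distrib]
    refine dvd_sum fun j _ => ?_
    split_ifs with hij
    · simp [hij]
    · simpa using hdvd i j (Ne.symm hij)
  have hmem : ∀ i T T', ∑ j ∈ T, c j = ∑ j ∈ T', c j → i ∈ T → i ∉ T' → m i ∣ c i := by
    intro i T T' hsum hiT hiT'
    have := dvd_sub (hmod i T) (hmod i T')
    rwa [if_pos hiT, if_neg hiT', hsum, sub_zero, sub_sub_cancel_left, dvd_neg] at this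
  intro T hT T' hT' hsum
  ext i
  constructor
  · exact fun hiT => by_contra fun hiT' =>
      hndvd i (mem_powerset.1 hT hiT) (hmem i T T' hsum hiT hiT')
  · exact fun hiT' => by_contra fun hiT =>
      hndvd i (mem_powerset.1 hT' hiT') (hmem i T' T hsum.symm hiT' hiT)

theorem Finset.sum_sign_mul_eq_sub_two_mul {ι R : Type*} [CommRing R] (s : Finset ι) (ε c : ι → R)
    [DecidablePred (ε · = -1)] (hε : ∀ j ∈ s, ε j = 1 ∨ ε j = -1) :
    ∑ j ∈ s, ε j * c j = ∑ j ∈ s, c j - 2 * ∑ j ∈ s with ε j = -1, c j := by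
  rw [sum_filter, mul_sum, ← sum_sub_distrib]
  refine sum_congr rfl fun j hj => ?_
  split_ifs with h
  · rw [h]; ring
  · rcases hε j hj with h' | h'
    · rw [h']; ring
    · exact absurd h' h

theorem sum_mul_lt_of_sum_div_lt_one {ι : Type*} [Fintype ι] (p phat h : ι → ℤ) (P : ℤ)
    (hp : ∀ j, 0 < p j) (hphat : ∀ j, p j * phat j = P) (hP : 0 < P)
    (hsum : ∑ j, (h j : ℚ) / p j < 1) :
    ∑ j, h j * phat j < P := by
  have hterm : ∀ j, ((h j * phat j : ℤ) : ℚ) = h j / p j * P := by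
    intro j
    have hpj : (p j : ℚ) ≠ 0 := by exact_mod_cast (hp j).ne'
    rw [← hphat j]
    push_cast
    field_simp
  have : ((∑ j, h j * phat j : ℤ) : ℚ) < P := by
    calc ((∑ j, h j * phat j : ℤ) : ℚ) = (∑ j, (h j : ℚ) / p j) * P := by
          push_cast [sum_mul]
          exact sum_congr rfl fun j _ => by exact_mod_cast hterm j
      _ < 1 * P := mul_lt_mul_of_pos_right hsum (by exact_mod_cast hP)
      _ = P := one_mul _
  exact_mod_cast this

theorem isCoprime_of_mul_eq_prod {ι R : Type*} [Fintype ι] [DecidableEq ι] [CommRing R]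
    [IsDomain R] (p phat : ι → R) (hp : ∀ j, p j ≠ 0)
    (hcop : ∀ i j, i ≠ j → IsCoprime (p i) (p j)) (hphat : ∀ j, p j * phat j = ∏ i, p i)
    (j : ι) : IsCoprime (p j) (phat j) := by
  have hphat_eq : phat j = ∏ i ∈ univ.erase j, p i :=
    mul_left_cancel₀ (hp j) (by rw [hphat, mul_prod_erase univ p (mem_univ j)])
  rw [hphat_eq]
  exact IsCoprime.prod_right fun i hi => hcop j i (ne_of_mem_erase hi).symm

theorem injOn_sum_powerset_mul_of_isCoprime {ι R : Type*} [Fintype ι] [DecidableEq ι]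
    [CommRing R] [IsDomain R] (p phat h : ι → R) (hp : ∀ j, p j ≠ 0)
    (hcop : ∀ i j, i ≠ j → IsCoprime (p i) (p j)) (hphat : ∀ j, p j * phat j = ∏ i, p i)
    (D : Finset ι) (hD : ∀ j ∈ D, ¬ p j ∣ h j) :
    Set.InjOn (fun T => ∑ j ∈ T, h j * phat j) D.powerset :=
  injOn_sum_powerset_of_dvd p _ D
    (fun i j hij => ((hcop i j hij).dvd_of_dvd_mul_left
      (by rw [hphat j]; exact Dvd.intro _ (hphat i))).mul_left _)
    (fun j hj hdvd => hD j hj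
      ((isCoprime_of_mul_eq_prod p phat hp hcop hphat j).dvd_of_dvd_mul_right hdvd))

theorem sum_Icc_mul_eq_sum_powerset {ι : Type*} [Fintype ι] [DecidableEq ι] (P : ℤ) (c : ι → ℤ)
    (hc : ∀ j, 0 ≤ c j) (hcP : ∑ j, c j < P) (D : Finset ι) (hcD : ∀ j ∉ D, c j = 0)
    (hinj : Set.InjOn (fun T => ∑ j ∈ T, c j) D.powerset) (J : Finset ι) (g : ℤ → ℤ)
    (hgval : ∀ (n : ℤ) (ε : ι → ℤ), (∀ j, ε j = 1 ∨ ε j = -1) →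
      2 * P ∣ n - (P + ∑ j, ε j * c j) → g n = ∏ j ∈ J, ε j)
    (hgzero : ∀ n : ℤ, (¬ ∃ ε : ι → ℤ, (∀ j, ε j = 1 ∨ ε j = -1) ∧
        2 * P ∣ n - (P + ∑ j, ε j * c j)) → g n = 0) (f : ℤ → ℤ) :
    ∑ m ∈ Icc 1 (2 * P), f m * g m =
      ∑ T ∈ D.powerset, (-1) ^ #(T ∩ J) * f (P + ∑ j, c j - 2 * ∑ j ∈ T, c j) := by
  let N : Finset ι → ℤ := fun T => P + ∑ j, c j - 2 * ∑ j ∈ T, c j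
  have hN : ∀ T, N T = P + ∑ j, c j - 2 * ∑ j ∈ T, c j := fun _ => rfl
  have hN_bounds : ∀ T, 0 < N T ∧ N T < 2 * P := by
    intro T
    have h₀ : 0 ≤ ∑ j ∈ T, c j := sum_nonneg fun j _ => hc j
    have h₁ : ∑ j ∈ T, c j ≤ ∑ j, c j :=
      sum_le_sum_of_subset_of_nonneg (subset_univ T) fun j _ _ => hc j
    rw [hN]
    constructor <;> omega
  have hgN : ∀ T, g (N T) = (-1) ^ #(T ∩ J) := by
    intro T
    set ε : ι → ℤ := fun j => if j ∈ T then -1 else 1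
    have hε : ∀ j, ε j = 1 ∨ ε j = -1 := fun j => by by_cases hj : j ∈ T <;> simp [ε, hj]
    have hεT : univ.filter (ε · = -1) = T := by ext j; by_cases hj : j ∈ T <;> simp [ε, hj]
    have hN_eq : P + ∑ j, ε j * c j = N T := by
      rw [sum_sign_mul_eq_sub_two_mul univ ε c fun j _ => hε j, hεT]; ring
    rw [hgval (N T) ε hε (by rw [hN_eq, sub_self]; exact dvd_zero _), prod_ite_mem, prod_const,
      inter_comm]
  have hg_zero : ∀ m ∈ Icc 1 (2 * P), m ∉ D.powerset.image N → g m = 0 := by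
    intro m hm hmN
    refine hgzero m fun ⟨ε, hε, hdvd⟩ => hmN (mem_image.2
      ⟨D.filter (ε · = -1), mem_powerset.2 (filter_subset _ _), ?_⟩)
    have hε_sum : ∑ j, ε j * c j = ∑ j, c j - 2 * ∑ j ∈ D with ε j = -1, c j := by
      rw [← sum_subset (subset_univ D) fun j _ hj => by simp [hcD j hj],
        sum_sign_mul_eq_sub_two_mul D ε c fun j _ => hε j,
        sum_subset (subset_univ D) fun j _ hj => hcD j hj]
    rw [hε_sum] at hdvd
    have hbounds := hN_bounds (D.filter (ε · = -1))
    rw [hN] at hbounds ⊢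
    have hm' := mem_Icc.1 hm
    have := Int.eq_zero_of_abs_lt_dvd hdvd (abs_sub_lt_iff.2 ⟨by omega, by omega⟩)
    omega
  calc ∑ m ∈ Icc 1 (2 * P), f m * g m = ∑ m ∈ D.powerset.image N, f m * g m := by
        refine (sum_subset (fun m hm => ?_) fun m hm hmN => by rw [hg_zero m hm hmN, mul_zero]).symm
        obtain ⟨T, -, rfl⟩ := mem_image.1 hm
        have := hN_bounds T
        exact mem_Icc.2 ⟨by omega, by omega⟩
    _ = ∑ T ∈ D.powerset, f (N T) * g (N T) :=
        sum_image fun T hT T' hT' h => hinj hT hT' (by rw [hN, hN] at h; simp only; omega)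
    _ = _ := sum_congr rfl fun T _ => by rw [hgN, mul_comm]

theorem stmt_13_general (r : ℕ) (hr : 3 ≤ r) (p : Fin r → ℤ)
    (hp : ∀ j, 0 < p j)
    (hcop : ∀ i j : Fin r, i ≠ j → IsCoprime (p i) (p j))
    (P : ℤ) (hP : P = ∏ j, p j)
    (phat : Fin r → ℤ) (hphat : ∀ j, p j * phat j = P)
    (h : Fin r → ℤ)
    (hh₁ : ∀ j, 0 ≤ h j ∧ h j ≤ p j)
    (hsum₁ : ∑ j, (h j : ℚ) / (p j : ℚ) < 1)
    (s : ℕ) (hs : s ≤ r - 3)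
    (J : Finset (Fin r))
    (hJh : ∀ j ∈ J, ¬ p j ∣ h j)
    (hJcard : r - s ≤ J.card)
    (g : ℤ → ℤ)
    (hgval : ∀ (n : ℤ) (ε : Fin r → ℤ), (∀ j, ε j = 1 ∨ ε j = -1) →
      2 * P ∣ n - (P + ∑ j, ε j * h j * phat j) →
      g n = ∏ j ∈ J, ε j)
    (hgzero : ∀ n : ℤ,
      (¬ ∃ ε : Fin r → ℤ, (∀ j, ε j = 1 ∨ ε j = -1) ∧
        2 * P ∣ n - (P + ∑ j, ε j * h j * phat j)) → g n = 0)
    (a : ℕ) (ha : a ≤ r - s - 1) :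
    ∑ m ∈ Finset.Icc (1 : ℤ) (2 * P), m ^ a * g m = 0 := by
  have hPpos : 0 < P := hP ▸ prod_pos fun j _ => hp j
  have hphat_pos : ∀ j, 0 < phat j := fun j => pos_of_mul_pos_right (hphat j ▸ hPpos) (hp j).le
  set c : Fin r → ℤ := fun j => h j * phat j
  have hc : ∀ j, 0 ≤ c j := fun j => mul_nonneg (hh₁ j).1 (hphat_pos j).le
  have hcP : ∑ j, c j < P := sum_mul_lt_of_sum_div_lt_one p phat h P hp hphat hPpos hsum₁
  set D := univ.filter fun j => ¬ p j ∣ h j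
  have hcD : ∀ j ∉ D, c j = 0 := by
    intro j hj
    have hcj : c j < p j * phat j := (hphat j).symm ▸
      (single_le_sum (fun i _ => hc i) (mem_univ j)).trans_lt hcP
    have hhj := Int.eq_zero_of_dvd_of_nonneg_of_lt (hh₁ j).1
      (lt_of_mul_lt_mul_right hcj (hphat_pos j).le) (by simpa [D] using hj)
    simp [c, hhj]
  have hinj := injOn_sum_powerset_mul_of_isCoprime p phat h (fun j => (hp j).ne') hcop
    (hP ▸ hphat) D fun j hj => (mem_filter.1 hj).2
  rw [sum_Icc_mul_eq_sum_powerset P c hc hcP D hcD hinj J g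
    (fun n ε hε hdvd => hgval n ε hε (by simpa only [mul_assoc] using hdvd))
    (fun n hn => hgzero n (by simpa only [mul_assoc] using hn)) (· ^ a)]
  have hJD : J ⊆ D := fun j hj => mem_filter.2 ⟨mem_univ j, hJh j hj⟩
  have hdeg : (X ^ a : ℤ[X]).degree < #(D ∩ J) := by
    rw [inter_eq_right.2 hJD, degree_X_pow]
    exact_mod_cast (by omega : a < #J)
  simpa [sub_eq_add_neg, mul_sum] using
    sum_powerset_neg_one_pow_mul_eval_eq_zero J D (fun j => -2 * c j) (X ^ a) hdeg (P + ∑ j, c j)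

/-- Vanishing of power moments: let `h ∈ 𝔥` with `0 < Σ_j h_j/p_j < 1`, let
`J ⊂ {1,…,r}` with `J ∩ J^h = ∅` and `|J| ≥ r - s` for some `0 ≤ s ≤ r-3`, and
let `g` be the `2P`-periodic generalized Hikami function `g_J^h` (equal to
`∏_{j∈J} ε_j` at `n ≡ P + Σ_j ε_j h_j p̂_j mod 2P`, zero off `𝔖^h`).
Then `Σ_{m=1}^{2P} m^a g(m) = 0` for every `0 ≤ a ≤ r - s - 1`. -/
theorem stmt_13 (r : ℕ) (hr : 3 ≤ r) (p : Fin r → ℤ)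
    (hp : ∀ j, 0 < p j)
    (hcop : ∀ i j : Fin r, i ≠ j → IsCoprime (p i) (p j))
    (P : ℤ) (hP : P = ∏ j, p j)
    (phat : Fin r → ℤ) (hphat : ∀ j, p j * phat j = P)
    (h : Fin r → ℤ)
    (hh₁ : ∀ j, 0 ≤ h j ∧ h j ≤ p j)
    (hh₂ : 3 ≤ Set.ncard {j : Fin r | ¬ p j ∣ h j})
    (hsum₀ : 0 < ∑ j, (h j : ℚ) / (p j : ℚ))
    (hsum₁ : ∑ j, (h j : ℚ) / (p j : ℚ) < 1)
    (s : ℕ) (hs : s ≤ r - 3)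
    (J : Finset (Fin r))
    (hJh : ∀ j ∈ J, ¬ p j ∣ h j)
    (hJcard : r - s ≤ J.card)
    (g : ℤ → ℤ)
    (hgval : ∀ (n : ℤ) (ε : Fin r → ℤ), (∀ j, ε j = 1 ∨ ε j = -1) →
      2 * P ∣ n - (P + ∑ j, ε j * h j * phat j) →
      g n = ∏ j ∈ J, ε j)
    (hgzero : ∀ n : ℤ,
      (¬ ∃ ε : Fin r → ℤ, (∀ j, ε j = 1 ∨ ε j = -1) ∧
        2 * P ∣ n - (P + ∑ j, ε j * h j * phat j)) → g n = 0)
    (a : ℕ) (ha : a ≤ r - s - 1) :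
    ∑ m ∈ Finset.Icc (1 : ℤ) (2 * P), m ^ a * g m = 0 :=
  stmt_13_general r hr p hp hcop P hP phat hphat h hh₁ hsum₁ s hs J hJh hJcard g hgval hgzero a ha
end

section
/- Chinese-remainder solvability on Hikami sets: let n ∈ ℤ and let J = { j ∈ {1,…,r} : p_j ∣ n } satisfy |J| ≤ r - 3. Then there exist a unique ℓ ∈ 𝔏(p₁,…,p_r) with J^ℓ = J and some ε ∈ {±1}^r such that n ≡ P + Σ_{j=1}^r ε_j ℓ_j (P/p_j) (mod 2P). Consequently, ℤ is the disjoint union of the set { n : |{j : p_j ∣ n}| > r-3 } and the Hikami sets 𝔖^ℓ, ℓ ∈ 𝔏. -/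
/-!
By the Chinese remainder theorem for the pairwise coprime moduli `2p₁, p₂, …, p_r` the congruence
modulo `2P` splits into one congruence `n ≡ P + ε_j ℓ_j p̂_j` per modulus: all other summands
vanish there, modulo `2p₁` because `p₁ ∣ p̂_i` and `ℓ_i` is even. As `p̂_j` is invertible modulo
its modulus, this fixes the class of `±ℓ_j`, and every class modulo `2p` is `±ℓ` for exactly one
`ℓ ∈ [0, p]`, while for odd `p` every class modulo `p` is `±ℓ` for exactly one even `ℓ ∈ [0, p]`.
The local congruence also gives `p_j ∣ ℓ_j ↔ p_j ∣ n`, so at least `r - |J| ≥ 3` of the `ℓ_j`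
are prime to `p_j`.
-/

open Finset Function

namespace Int

variable {p : ℤ}

lemma exists_sign_mul_modEq_two_mul (hp : 0 < p) (c : ℤ) :
    ∃ l e, (0 ≤ l ∧ l ≤ p) ∧ IsUnit e ∧ e * l ≡ c [ZMOD 2 * p] := by
  have h0 : 0 ≤ c % (2 * p) := emod_nonneg c (by omega)
  have h1 : c % (2 * p) < 2 * p := emod_lt_of_pos c (by omega)
  by_cases hle : c % (2 * p) ≤ p
  · exact ⟨c % (2 * p), 1, ⟨h0, hle⟩, isUnit_one, by simpa using mod_modEq c (2 * p)⟩
  · refine ⟨2 * p - c % (2 * p), -1, ⟨by omega, by omega⟩, isUnit_one.neg, ?_⟩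
    simpa [neg_sub] using (mod_modEq c (2 * p)).sub_right (2 * p)

lemma eq_of_modEq_unit_mul_two_mul {a b e : ℤ} (ha : 0 ≤ a ∧ a ≤ p) (hb : 0 ≤ b ∧ b ≤ p)
    (he : IsUnit e) (h : a ≡ e * b [ZMOD 2 * p]) : a = b := by
  obtain rfl | hp := (ha.1.trans ha.2).eq_or_lt
  · omega
  rcases isUnit_iff.mp he with rfl | rfl
  · rw [one_mul] at h
    have := eq_zero_of_abs_lt_dvd h.dvd (by rw [abs_lt]; omega)
    omega
  · obtain ⟨k, hk⟩ : 2 * p ∣ a + b := by simpa using h.dvd.neg_right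
    have hk0 : 0 ≤ k := by nlinarith
    have hk1 : k ≤ 1 := by nlinarith
    interval_cases k <;> omega

lemma eq_of_unit_mul_modEq_unit_mul_two_mul {a b e e' : ℤ} (ha : 0 ≤ a ∧ a ≤ p)
    (hb : 0 ≤ b ∧ b ≤ p) (he : IsUnit e) (he' : IsUnit e')
    (h : e * a ≡ e' * b [ZMOD 2 * p]) : a = b := by
  refine eq_of_modEq_unit_mul_two_mul ha hb (he.mul he') ?_
  simpa [← mul_assoc, isUnit_mul_self he] using h.mul_left e

lemma existsUnique_sign_mul_modEq_two_mul (hp : 0 < p) (c : ℤ) :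
    ∃! l, (0 ≤ l ∧ l ≤ p) ∧ ∃ e, IsUnit e ∧ e * l ≡ c [ZMOD 2 * p] := by
  obtain ⟨l, e, hl, he, hc⟩ := exists_sign_mul_modEq_two_mul hp c
  exact ⟨l, ⟨hl, e, he, hc⟩, fun l' ⟨hl', e', he', hc'⟩ =>
    eq_of_unit_mul_modEq_unit_mul_two_mul hl' hl he' he (hc'.trans hc.symm)⟩

lemma existsUnique_even_sign_mul_modEq (hp : 0 < p) (hpo : Odd p) (c : ℤ) :
    ∃! l, ((0 ≤ l ∧ l ≤ p) ∧ 2 ∣ l) ∧ ∃ e, IsUnit e ∧ e * l ≡ c [ZMOD p] := by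
  have hcop : (2 : ℤ).natAbs.Coprime p.natAbs := by
    simpa [Nat.coprime_two_left, natAbs_odd] using hpo
  -- `(1 - p) * c` is even and congruent to `c` modulo `p`
  obtain ⟨l, e, hl, he, hc⟩ := exists_sign_mul_modEq_two_mul hp ((1 - p) * c)
  have hc2 : e * l ≡ 0 [ZMOD 2] := by
    obtain ⟨k, hk⟩ := hpo
    exact (hc.of_mul_right p).trans (Dvd.dvd.modEq_zero_int ⟨-k * c, by rw [hk]; ring⟩)
  have hcp : e * l ≡ c [ZMOD p] := by
    simpa [sub_mul, modEq_sub_modulus_mul_iff] using hc.of_mul_left 2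
  refine ⟨l, ⟨⟨hl, he.dvd_mul_left.mp (modEq_zero_iff_dvd.mp hc2)⟩, e, he, hcp⟩,
    fun l' ⟨⟨hl', hl'2⟩, e', he', hc'⟩ => ?_⟩
  have hc2' : e' * l' ≡ 0 [ZMOD 2] := (Dvd.dvd.mul_left hl'2 e').modEq_zero_int
  exact eq_of_unit_mul_modEq_unit_mul_two_mul hl' hl he' he
    ((modEq_and_modEq_iff_modEq_mul hcop).mp ⟨hc2'.trans hc2.symm, hc'.trans hcp.symm⟩)

lemma exists_modEq_add_mul_iff {w m : ℤ} (hw : IsCoprime w m) (c d : ℤ) :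
    ∃ c', ∀ x, c ≡ d + x * w [ZMOD m] ↔ x ≡ c' [ZMOD m] := by
  have ⟨u, v, huv⟩ := hw
  refine ⟨(c - d) * u, fun x => ?_⟩
  have key : d + x * w - c = -(w * ((c - d) * u - x)) - (c - d) * v * m := by
    linear_combination (c - d) * huv
  rw [modEq_iff_dvd, modEq_iff_dvd, key, dvd_sub_left (dvd_mul_left m _), dvd_neg]
  exact ⟨hw.symm.dvd_of_dvd_mul_left, fun h => h.mul_left w⟩

lemma modEq_prod_iff {ι : Type*} {s : Finset ι} {m : ι → ℤ}
    (hm : (s : Set ι).Pairwise (IsCoprime on m)) {a b : ℤ} :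
    a ≡ b [ZMOD ∏ i ∈ s, m i] ↔ ∀ i ∈ s, a ≡ b [ZMOD m i] := by
  simp only [modEq_iff_dvd]
  exact ⟨fun h i hi => (dvd_prod_of_mem m hi).trans h, prod_dvd_of_coprime hm⟩

lemma dvd_iff_dvd_of_modEq_add_unit_mul {q m c d e l w : ℤ} (h : c ≡ d + e * l * w [ZMOD m])
    (hqm : q ∣ m) (hqd : q ∣ d) (hw : IsCoprime w q) (he : IsUnit e) : q ∣ l ↔ q ∣ c := by
  rw [(h.of_dvd hqm).dvd_iff, dvd_add_right hqd]
  exact ⟨fun h => (h.mul_left e).mul_right w,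
    fun h => he.dvd_mul_left.mp (hw.symm.dvd_of_dvd_mul_right h)⟩

end Int

section Hikami

variable {ι : Type*} [DecidableEq ι] (p : ι → ℤ) (i₀ : ι)

/-- The moduli `2p₁, p₂, …, p_r`, with `i₀` the index of `p₁`. -/
def hikamiModulus : ι → ℤ := update p i₀ (2 * p i₀)

variable {p}

lemma dvd_hikamiModulus (j : ι) : p j ∣ hikamiModulus p i₀ j := by
  by_cases hj : j = i₀
  · subst hj; simp [hikamiModulus]
  · simp [hikamiModulus, hj]

lemma pairwise_isCoprime_hikamiModulus (hcop : Pairwise (IsCoprime on p))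
    (hodd : ∀ j ≠ i₀, Odd (p j)) : Pairwise (IsCoprime on hikamiModulus p i₀) := by
  intro i j hij
  rcases eq_or_ne i i₀ with rfl | hi
  · rw [onFun, hikamiModulus, update_self, update_of_ne hij.symm]
    exact (Int.isCoprime_two_left.mpr (hodd j hij.symm)).mul_left (hcop hij)
  rcases eq_or_ne j i₀ with rfl | hj
  · rw [onFun, hikamiModulus, update_self, update_of_ne hij]
    exact (Int.isCoprime_two_right.mpr (hodd i hij)).mul_right (hcop hij)
  · rw [onFun, hikamiModulus, update_of_ne hi, update_of_ne hj]
    exact hcop hij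

variable (p) [Fintype ι]

def cofactor (j : ι) : ℤ := ∏ i ∈ univ.erase j, p i

lemma mul_cofactor (j : ι) : p j * cofactor p j = ∏ i, p i :=
  mul_prod_erase _ _ (mem_univ j)

lemma prod_hikamiModulus : ∏ j, hikamiModulus p i₀ j = 2 * ∏ j, p j := by
  rw [hikamiModulus, prod_update_of_mem (mem_univ i₀), sdiff_singleton_eq_erase, mul_assoc]
  exact congrArg _ (mul_cofactor p i₀)

variable {p}

lemma dvd_cofactor {i j : ι} (hij : i ≠ j) : p i ∣ cofactor p j :=
  dvd_prod_of_mem p (mem_erase.mpr ⟨hij, mem_univ i⟩)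

lemma isCoprime_cofactor (hcop : Pairwise (IsCoprime on p)) (j : ι) :
    IsCoprime (cofactor p j) (p j) :=
  IsCoprime.prod_left fun _ hi => hcop (ne_of_mem_erase hi)

lemma isCoprime_cofactor_hikamiModulus (hcop : Pairwise (IsCoprime on p))
    (hodd : ∀ j ≠ i₀, Odd (p j)) (j : ι) : IsCoprime (cofactor p j) (hikamiModulus p i₀ j) := by
  by_cases hj : j = i₀
  · subst hj
    rw [hikamiModulus, update_self]
    refine IsCoprime.mul_right ?_ (isCoprime_cofactor hcop j)
    exact IsCoprime.prod_left fun i hi => Int.isCoprime_two_right.mpr (hodd i (ne_of_mem_erase hi))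
  · rw [hikamiModulus, update_of_ne hj]
    exact isCoprime_cofactor hcop j

lemma hikamiModulus_dvd_mul_cofactor {ℓ : ι → ℤ} (hev : ∀ i ≠ i₀, 2 ∣ ℓ i) {i j : ι}
    (hij : i ≠ j) : hikamiModulus p i₀ j ∣ ℓ i * cofactor p i := by
  by_cases hj : j = i₀
  · subst hj
    rw [hikamiModulus, update_self]
    exact mul_dvd_mul (hev i hij) (dvd_cofactor hij.symm)
  · rw [hikamiModulus, update_of_ne hj]
    exact (dvd_cofactor hij.symm).mul_left _

lemma modEq_add_sum_iff_forall_hikamiModulus (hcop : Pairwise (IsCoprime on p))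
    (hodd : ∀ j ≠ i₀, Odd (p j)) {ℓ : ι → ℤ} (hev : ∀ i ≠ i₀, 2 ∣ ℓ i) (ε : ι → ℤ) (c d : ℤ) :
    c ≡ d + ∑ j, ε j * ℓ j * cofactor p j [ZMOD 2 * ∏ j, p j] ↔
      ∀ j, c ≡ d + ε j * ℓ j * cofactor p j [ZMOD hikamiModulus p i₀ j] := by
  rw [← prod_hikamiModulus, Int.modEq_prod_iff
    fun i _ j _ hij => pairwise_isCoprime_hikamiModulus i₀ hcop hodd hij]
  refine forall_congr' fun j => ?_
  have hsum : ∑ i, ε i * ℓ i * cofactor p i ≡ ε j * ℓ j * cofactor p j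
      [ZMOD hikamiModulus p i₀ j] :=
    Int.sum_modEq_single (fun h => absurd (mem_univ j) h) fun i _ hij => by
      rw [mul_assoc]
      exact ((hikamiModulus_dvd_mul_cofactor i₀ hev hij).mul_left _).modEq_zero_int
  simpa using ⟨fun h => h.trans (hsum.add_left d), fun h => h.trans (hsum.add_left d).symm⟩

lemma existsUnique_modEq_add_sign_mul_cofactor (hp : ∀ j, 0 < p j)
    (hcop : Pairwise (IsCoprime on p)) (hodd : ∀ j ≠ i₀, Odd (p j)) (j : ι) (c d : ℤ) :
    ∃! l, ((0 ≤ l ∧ l ≤ p j) ∧ (j ≠ i₀ → 2 ∣ l)) ∧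
      ∃ e, IsUnit e ∧ c ≡ d + e * l * cofactor p j [ZMOD hikamiModulus p i₀ j] := by
  obtain ⟨c', hc'⟩ :=
    Int.exists_modEq_add_mul_iff (isCoprime_cofactor_hikamiModulus i₀ hcop hodd j) c d
  simp only [hc']
  by_cases hj : j = i₀
  · subst hj
    simpa [hikamiModulus] using Int.existsUnique_sign_mul_modEq_two_mul (hp j) c'
  · simpa [hikamiModulus, hj] using Int.existsUnique_even_sign_mul_modEq (hp j) (hodd j hj) c'

end Hikami

/-- Chinese-remainder solvability on Hikami sets: let `n ∈ ℤ` and let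
`J = {j : p_j ∣ n}` satisfy `|J| ≤ r - 3`. Then there exists a unique
`ℓ ∈ 𝔏(p₁,…,p_r)` with `J^ℓ = J` such that for some sign vector `ε`,
`n ≡ P + Σ_j ε_j ℓ_j (P/p_j) (mod 2P)`, i.e. `n` lies in the Hikami set `𝔖^ℓ`. -/
theorem stmt_15 (r : ℕ) (hr : 3 ≤ r) (p : Fin r → ℤ)
    (hp : ∀ j, 0 < p j)
    (hcop : ∀ i j : Fin r, i ≠ j → IsCoprime (p i) (p j))
    (hodd : ∀ j : Fin r, (j : ℕ) ≠ 0 → Odd (p j))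
    (P : ℤ) (hP : P = ∏ j, p j)
    (phat : Fin r → ℤ) (hphat : ∀ j, p j * phat j = P)
    (n : ℤ)
    (hJ : Set.ncard {j : Fin r | p j ∣ n} ≤ r - 3) :
    ∃! ℓ : Fin r → ℤ,
      ((∀ j, 0 ≤ ℓ j ∧ ℓ j ≤ p j) ∧
        3 ≤ Set.ncard {j : Fin r | ¬ p j ∣ ℓ j} ∧
        (∀ j : Fin r, (j : ℕ) ≠ 0 → 2 ∣ ℓ j)) ∧
      {j : Fin r | p j ∣ ℓ j} = {j : Fin r | p j ∣ n} ∧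
      ∃ ε : Fin r → ℤ, (∀ j, ε j = 1 ∨ ε j = -1) ∧
        n ≡ P + ∑ j, ε j * ℓ j * phat j [ZMOD 2 * P] := by
  subst hP
  obtain rfl : phat = cofactor p :=
    funext fun j => mul_left_cancel₀ (hp j).ne' ((hphat j).trans (mul_cofactor p j).symm)
  let i₀ : Fin r := ⟨0, by omega⟩
  have hi₀ : ∀ j, j ≠ i₀ ↔ (j : ℕ) ≠ 0 := fun j => Fin.ne_iff_vne j i₀
  have hcop' : Pairwise (IsCoprime on p) := fun i j => hcop i j
  have hodd' : ∀ j ≠ i₀, Odd (p j) := fun j hj => hodd j ((hi₀ j).mp hj)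
  choose L hL hL_unique using fun j =>
    existsUnique_modEq_add_sign_mul_cofactor i₀ hp hcop' hodd' j n (∏ j, p j)
  choose E hE hLE using fun j => (hL j).2
  have hLn : ∀ j, p j ∣ L j ↔ p j ∣ n := fun j =>
    Int.dvd_iff_dvd_of_modEq_add_unit_mul (hLE j) (dvd_hikamiModulus i₀ j)
      (dvd_prod_of_mem p (mem_univ j)) (isCoprime_cofactor hcop' j) (hE j)
  have hLev : ∀ i ≠ i₀, 2 ∣ L i := fun i hi => (hL i).1.2 hi
  have hcard : 3 ≤ Set.ncard {j | ¬ p j ∣ L j} := by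
    have := Set.ncard_add_ncard_compl {j | p j ∣ n}
    simp only [Nat.card_eq_fintype_card, Fintype.card_fin] at this
    simp only [hLn, ← Set.compl_ofPred]
    omega
  refine ⟨L, ⟨⟨fun j => (hL j).1.1, hcard, fun j hj => hLev j ((hi₀ j).mpr hj)⟩,
    Set.ext hLn, E, fun j => Int.isUnit_iff.mp (hE j),
    (modEq_add_sum_iff_forall_hikamiModulus i₀ hcop' hodd' hLev E _ _).mpr hLE⟩, ?_⟩
  rintro ℓ ⟨⟨hbox, -, hev⟩, -, ε, hε, hmod⟩
  have hev' : ∀ i ≠ i₀, 2 ∣ ℓ i := fun i hi => hev i ((hi₀ i).mp hi)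
  funext j
  exact hL_unique j (ℓ j) ⟨⟨hbox j, hev' j⟩, ε j, Int.isUnit_iff.mpr (hε j),
    (modEq_add_sum_iff_forall_hikamiModulus i₀ hcop' hodd' hev' ε _ _).mp hmod j⟩
end

section
/- Equivalence classes and the set 𝔏: define an equivalence relation on 𝔥 by h ∼ h' iff there exists J ⊂ {1,…,r} of even cardinality with h_j = p_j - h'_j for j ∈ J and h_j = h'_j for j ∉ J. Then 𝔏(p₁,…,p_r) is a complete system of representatives for 𝔥/∼, and h ∼ h' implies J^h = J^{h'} and 𝔖^h = 𝔖^{h'}. -/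
/-!
Reflecting `h_j ↦ p_j - h_j` preserves `0 ≤ h_j ≤ p_j` and the condition `p_j ∣ h_j`, and for
odd `p_j` it flips the parity of `h_j`. Hence the reflection set `J` taking `h` to an element
of `𝔏` is forced on the indices `j ≥ 2` (there it consists of the `j` with `h_j` odd), and the
evenness of `|J|` then decides whether the first index is reflected; this gives existence and
uniqueness of the representative. For `𝔖`, reflecting on `J` and flipping the signs `ε_j` for
`j ∈ J` changes `∑ ε_j h_j P/p_j` by `P ∑_{j ∈ J} ε_j`, a multiple of `2P` since `|J|` is even.
-/

/-- Membership in `𝔥(p₁,…,p_r)`: `0 ≤ h_j ≤ p_j` and `p_j ∤ h_j` for at least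
three indices `j`. -/
def memH {r : ℕ} (p h : Fin r → ℤ) : Prop :=
  (∀ j, 0 ≤ h j ∧ h j ≤ p j) ∧ 3 ≤ Set.ncard {j : Fin r | ¬ p j ∣ h j}

/-- Membership in `𝔏(p₁,…,p_r)`: in addition, `h_j` is even for all `j ≥ 2`
(here: for all indices other than the first). -/
def memL {r : ℕ} (p h : Fin r → ℤ) : Prop :=
  memH p h ∧ ∀ j : Fin r, (j : ℕ) ≠ 0 → 2 ∣ h j

/-- The equivalence relation on `𝔥`: `h ∼ h'` iff there is a subset `J` of even
cardinality with `h_j = p_j - h'_j` for `j ∈ J` and `h_j = h'_j` for `j ∉ J`. -/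
def hikamiRel {r : ℕ} (p h h' : Fin r → ℤ) : Prop :=
  ∃ J : Finset (Fin r), Even J.card ∧
    (∀ j ∈ J, h j = p j - h' j) ∧ (∀ j ∉ J, h j = h' j)

open Finset

section Reflect

variable {ι : Type*}

lemma two_dvd_sum_of_even_card (ε : ι → ℤ) {K : Finset ι} (hK : Even K.card)
    (hε : ∀ j ∈ K, ε j = 1 ∨ ε j = -1) : 2 ∣ ∑ j ∈ K, ε j := by
  have hε2 : ∀ j ∈ K, (ε j : ZMod 2) = 1 := fun j hj => by
    rcases hε j hj with h | h <;> simp [h]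
  have hsum : ((∑ j ∈ K, ε j : ℤ) : ZMod 2) = 0 := by
    push_cast
    rwa [sum_congr rfl hε2, sum_const, nsmul_one, ZMod.natCast_eq_zero_iff_even]
  exact (ZMod.intCast_zmod_eq_zero_iff_dvd _ 2).mp hsum

variable [DecidableEq ι]

def reflect (p : ι → ℤ) (K : Finset ι) (h : ι → ℤ) : ι → ℤ :=
  fun j => if j ∈ K then p j - h j else h j

variable {p h : ι → ℤ} {K : Finset ι}

@[simp]
lemma reflect_reflect : reflect p K (reflect p K h) = h := by
  funext j
  unfold reflect
  split_ifs <;> ring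

lemma eq_reflect_comm {h' : ι → ℤ} : h = reflect p K h' ↔ h' = reflect p K h := by
  constructor <;> rintro rfl <;> exact reflect_reflect.symm

lemma dvd_reflect_iff (j : ι) : p j ∣ reflect p K h j ↔ p j ∣ h j := by
  unfold reflect
  split_ifs
  exacts [dvd_sub_right dvd_rfl, Iff.rfl]

lemma reflect_mem_Icc {j : ι} (hj : 0 ≤ h j ∧ h j ≤ p j) :
    0 ≤ reflect p K h j ∧ reflect p K h j ≤ p j := by
  unfold reflect
  split_ifs <;> constructor <;> linarith [hj.1, hj.2]

lemma even_reflect_iff {j : ι} (hp : Odd (p j)) :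
    Even (reflect p K h j) ↔ (j ∈ K ↔ ¬ Even (h j)) := by
  unfold reflect
  split_ifs with hj <;> simp [hj, Int.even_sub, Int.not_even_iff_odd.mpr hp]

end Reflect

namespace Finset

variable {ι : Type*} [DecidableEq ι]

lemma exists_even_card_forall_ne_mem_iff (i : ι) (S : Finset ι) :
    ∃ K : Finset ι, Even K.card ∧ ∀ j ≠ i, (j ∈ K ↔ j ∈ S) := by
  by_cases hS : Even (S.erase i).card
  · exact ⟨S.erase i, hS, fun j hj => by simp [hj]⟩
  · refine ⟨insert i (S.erase i), ?_, fun j hj => by simp [hj]⟩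
    rwa [card_insert_of_notMem (notMem_erase i S), Nat.even_add_one]

lemma eq_of_even_card_of_forall_ne {K K' : Finset ι} (i : ι) (hK : Even K.card)
    (hK' : Even K'.card) (hKK' : ∀ j ≠ i, (j ∈ K ↔ j ∈ K')) : K = K' := by
  have parity : ∀ {A B : Finset ι}, Even A.card → Even B.card → A.erase i = B.erase i →
      i ∈ A → i ∈ B := by
    intro A B hA hB hAB hiA
    by_contra hiB
    rw [← card_erase_add_one hiA, hAB, erase_eq_of_notMem hiB] at hA
    exact Nat.even_add_one.mp hA hB
  have herase : K.erase i = K'.erase i := by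
    ext j
    by_cases hj : j = i <;> simp [hj, hKK']
  ext j
  by_cases hj : j = i
  · subst hj
    exact ⟨parity hK hK' herase, parity hK' hK herase.symm⟩
  · exact hKK' j hj

end Finset

section Hikami

variable {r : ℕ} {p : Fin r → ℤ}

lemma hikamiRel_iff_eq_reflect {h h' : Fin r → ℤ} :
    hikamiRel p h h' ↔ ∃ K : Finset (Fin r), Even K.card ∧ h' = reflect p K h := by
  refine exists_congr fun K => and_congr_right fun _ => ?_
  rw [eq_reflect_comm]
  simp only [funext_iff, reflect]
  constructor
  · rintro ⟨hin, hout⟩ j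
    split_ifs with hj
    exacts [hin j hj, hout j hj]
  · intro heq
    exact ⟨fun j hj => by simpa [hj] using heq j, fun j hj => by simpa [hj] using heq j⟩

lemma memH_reflect {h : Fin r → ℤ} (hh : memH p h) (K : Finset (Fin r)) :
    memH p (reflect p K h) := by
  refine ⟨fun j => reflect_mem_Icc (hh.1 j), ?_⟩
  simpa only [dvd_reflect_iff] using hh.2

lemma memL_reflect_iff (hodd : ∀ j : Fin r, (j : ℕ) ≠ 0 → Odd (p j)) {h : Fin r → ℤ}
    (hh : memH p h) (K : Finset (Fin r)) :
    memL p (reflect p K h) ↔ ∀ j : Fin r, (j : ℕ) ≠ 0 → (j ∈ K ↔ ¬ Even (h j)) := by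
  simp only [memL, memH_reflect hh K, true_and, ← even_iff_two_dvd]
  exact forall₂_congr fun j hj => even_reflect_iff (hodd j hj)

theorem existsUnique_memL_hikamiRel (hr : 0 < r) (hodd : ∀ j : Fin r, (j : ℕ) ≠ 0 → Odd (p j))
    {h : Fin r → ℤ} (hh : memH p h) : ∃! ℓ : Fin r → ℤ, memL p ℓ ∧ hikamiRel p h ℓ := by
  let i₀ : Fin r := ⟨0, hr⟩
  simp only [hikamiRel_iff_eq_reflect]
  obtain ⟨K₀, hK₀, hK₀odd⟩ :=
    exists_even_card_forall_ne_mem_iff i₀ (univ.filter fun j => ¬ Even (h j))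
  have hK₀odd' : ∀ j : Fin r, (j : ℕ) ≠ 0 → (j ∈ K₀ ↔ ¬ Even (h j)) := fun j hj => by
    simpa using hK₀odd j (Fin.val_ne_iff.mp hj)
  refine ⟨reflect p K₀ h, ⟨(memL_reflect_iff hodd hh K₀).mpr hK₀odd', K₀, hK₀, rfl⟩, ?_⟩
  rintro _ ⟨hℓ, K, hK, rfl⟩
  rw [memL_reflect_iff hodd hh] at hℓ
  have : K = K₀ := eq_of_even_card_of_forall_ne i₀ hK hK₀ fun j hj =>
    (hℓ j (Fin.val_ne_iff.mpr hj)).trans (hK₀odd' j (Fin.val_ne_iff.mpr hj)).symm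
  rw [this]

lemma setOf_dvd_eq_of_hikamiRel {h h' : Fin r → ℤ} (hrel : hikamiRel p h h') :
    {j : Fin r | p j ∣ h j} = {j : Fin r | p j ∣ h' j} := by
  obtain ⟨K, -, rfl⟩ := hikamiRel_iff_eq_reflect.mp hrel
  ext j
  exact (dvd_reflect_iff j).symm

/-- `memS P phat h n` says `n ∈ 𝔖^h`, with `phat j = P / p j`. -/
def memS (P : ℤ) (phat h : Fin r → ℤ) (n : ℤ) : Prop :=
  ∃ ε : Fin r → ℤ, (∀ j, ε j = 1 ∨ ε j = -1) ∧ 2 * P ∣ n - (P + ∑ j, ε j * h j * phat j)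

variable {P : ℤ} {phat : Fin r → ℤ}

lemma sum_reflect_mul (hphat : ∀ j, p j * phat j = P) (K : Finset (Fin r))
    (ε h : Fin r → ℤ) :
    ∑ j, (if j ∈ K then -ε j else ε j) * reflect p K h j * phat j
      = ∑ j, ε j * h j * phat j - P * ∑ j ∈ K, ε j := by
  have hterm : ∀ j, (if j ∈ K then -ε j else ε j) * reflect p K h j * phat j
      = ε j * h j * phat j - P * (if j ∈ K then ε j else 0) := fun j => by
    unfold reflect
    split_ifs
    · linear_combination (-ε j) * hphat j
    · ring
  rw [sum_congr rfl fun j _ => hterm j, sum_sub_distrib, ← mul_sum,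
    sum_ite_mem, univ_inter]

lemma memS_reflect (hphat : ∀ j, p j * phat j = P) {K : Finset (Fin r)} (hK : Even K.card)
    {h : Fin r → ℤ} {n : ℤ} (hn : memS P phat h n) : memS P phat (reflect p K h) n := by
  obtain ⟨ε, hε, hdvd⟩ := hn
  refine ⟨fun j => if j ∈ K then -ε j else ε j, fun j => ?_, ?_⟩
  · dsimp only
    split_ifs <;> rcases hε j with h | h <;> simp [h]
  · rw [sum_reflect_mul hphat, show ∀ a b : ℤ, n - (P + (a - P * b)) = n - (P + a) + P * b by
      intros; ring]
    obtain ⟨c, hc⟩ := two_dvd_sum_of_even_card ε hK fun j _ => hε j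
    exact dvd_add hdvd ⟨c, by rw [hc]; ring⟩

lemma memS_iff_of_hikamiRel (hphat : ∀ j, p j * phat j = P) {h h' : Fin r → ℤ}
    (hrel : hikamiRel p h h') (n : ℤ) : memS P phat h n ↔ memS P phat h' n := by
  obtain ⟨K, hK, rfl⟩ := hikamiRel_iff_eq_reflect.mp hrel
  refine ⟨memS_reflect hphat hK, fun hn => ?_⟩
  simpa using memS_reflect hphat hK hn

end Hikami

theorem stmt_16_general (r : ℕ) (hr : 3 ≤ r) (p : Fin r → ℤ)
    (hodd : ∀ j : Fin r, (j : ℕ) ≠ 0 → Odd (p j))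
    (P : ℤ)
    (phat : Fin r → ℤ) (hphat : ∀ j, p j * phat j = P) :
    (∀ h : Fin r → ℤ, memH p h →
      ∃! ℓ : Fin r → ℤ, memL p ℓ ∧ hikamiRel p h ℓ) ∧
    (∀ h h' : Fin r → ℤ, memH p h → memH p h' → hikamiRel p h h' →
      ({j : Fin r | p j ∣ h j} = {j : Fin r | p j ∣ h' j}) ∧
      (∀ n : ℤ,
        (∃ ε : Fin r → ℤ, (∀ j, ε j = 1 ∨ ε j = -1) ∧
          2 * P ∣ n - (P + ∑ j, ε j * h j * phat j)) ↔
        (∃ ε : Fin r → ℤ, (∀ j, ε j = 1 ∨ ε j = -1) ∧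
          2 * P ∣ n - (P + ∑ j, ε j * h' j * phat j)))) :=
  ⟨fun _ hh => existsUnique_memL_hikamiRel (by omega) hodd hh,
    fun _ _ _ _ hrel => ⟨setOf_dvd_eq_of_hikamiRel hrel, memS_iff_of_hikamiRel hphat hrel⟩⟩

/-- `𝔏(p₁,…,p_r)` is a complete system of representatives of `𝔥/∼`, and
`h ∼ h'` implies `J^h = J^{h'}` and `𝔖^h = 𝔖^{h'}`. -/
theorem stmt_16 (r : ℕ) (hr : 3 ≤ r) (p : Fin r → ℤ)
    (hp : ∀ j, 0 < p j)
    (hcop : ∀ i j : Fin r, i ≠ j → IsCoprime (p i) (p j))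
    (hodd : ∀ j : Fin r, (j : ℕ) ≠ 0 → Odd (p j))
    (P : ℤ) (hP : P = ∏ j, p j)
    (phat : Fin r → ℤ) (hphat : ∀ j, p j * phat j = P) :
    (∀ h : Fin r → ℤ, memH p h →
      ∃! ℓ : Fin r → ℤ, memL p ℓ ∧ hikamiRel p h ℓ) ∧
    (∀ h h' : Fin r → ℤ, memH p h → memH p h' → hikamiRel p h h' →
      ({j : Fin r | p j ∣ h j} = {j : Fin r | p j ∣ h' j}) ∧
      (∀ n : ℤ,
        (∃ ε : Fin r → ℤ, (∀ j, ε j = 1 ∨ ε j = -1) ∧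
          2 * P ∣ n - (P + ∑ j, ε j * h j * phat j)) ↔
        (∃ ε : Fin r → ℤ, (∀ j, ε j = 1 ∨ ε j = -1) ∧
          2 * P ∣ n - (P + ∑ j, ε j * h' j * phat j)))) :=
  stmt_16_general r hr p hodd P phat hphat
end

section
/- For h ∼ h' in 𝔥 with t_h = t_{h'} = 0, the 0-Hikami functions coincide: m⁰f^h = m⁰f^{h'} as functions ℤ → ℤ. (Proof via generating functions: if h, h' differ by the involution on an even-cardinality set J, then ∏_j (z^{h'_j p̂_j} - z^{-h'_j p̂_j}) = (-z^P)^{|J|} ∏_j (z^{h_j p̂_j} - z^{-h_j p̂_j}), and (-z^P)^{|J|} = z^{|J|P} acts as multiplication by a power of z^{2P}, modulo which the generating functions of 2P-periodic sequences are compared.) -/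
/-!
If `h ∼ h'` via the set `J`, flipping the signs `ε_j` for `j ∈ J` is a bijection between
the sign vectors of `h` and those of `h'`. It preserves `∏ ε_j` because `|J|` is even, and
it preserves `P + Σ ε_j h_j p̂_j` modulo `2P`: since `p_j p̂_j = P`, the two sums differ by
`(Σ_{j ∈ J} ε_j) P`, and `Σ_{j ∈ J} ε_j ≡ |J| ≡ 0 (mod 2)`.
-/

open Finset

variable {ι : Type*} [DecidableEq ι]

lemma sign_piecewise_neg {ε : ι → ℤ} (hε : ∀ j, ε j = 1 ∨ ε j = -1) (J : Finset ι) (j : ι) :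
    J.piecewise (-ε) ε j = 1 ∨ J.piecewise (-ε) ε j = -1 := by
  by_cases hj : j ∈ J
  · rw [piecewise_eq_of_mem _ _ _ hj, Pi.neg_apply, neg_eq_iff_eq_neg, neg_eq_iff_eq_neg]
    exact (hε j).symm
  · rw [piecewise_eq_of_notMem _ _ _ hj]
    exact hε j

omit [DecidableEq ι] in
lemma even_sum_sign_of_even_card {ε : ι → ℤ} (hε : ∀ j, ε j = 1 ∨ ε j = -1) {J : Finset ι}
    (hJ : Even #J) : Even (∑ j ∈ J, ε j) := by
  have hshift : Even (∑ j ∈ J, (ε j - 1)) :=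
    even_sum _ fun j _ => by rcases hε j with e | e <;> simp [e]
  have hsplit : ∑ j ∈ J, ε j = ∑ j ∈ J, (ε j - 1) + #J := by
    simp [sum_sub_distrib]
  rw [hsplit]
  exact hshift.add (Int.even_coe_nat _ |>.mpr hJ)

variable [Fintype ι]

lemma prod_piecewise_neg_of_even {R : Type*} [CommRing R] (ε : ι → R) {J : Finset ι}
    (hJ : Even #J) : ∏ j, J.piecewise (-ε) ε j = ∏ j, ε j := by
  rw [prod_piecewise, univ_inter, Pi.neg_def, prod_neg, hJ.neg_one_pow, one_mul,
    ← compl_eq_univ_sdiff, prod_mul_prod_compl]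

lemma sum_sub_sum_piecewise_neg {R : Type*} [CommRing R] {p phat h h' : ι → R} {P : R}
    (hphat : ∀ j, p j * phat j = P) {J : Finset ι}
    (hJ : ∀ j ∈ J, h j = p j - h' j) (hJc : ∀ j ∉ J, h j = h' j) (ε : ι → R) :
    ∑ j, ε j * h j * phat j - ∑ j, J.piecewise (-ε) ε j * h' j * phat j
      = (∑ j ∈ J, ε j) * P := by
  rw [← sum_sub_distrib, sum_mul, ← sum_filter_add_sum_filter_not univ (· ∈ J),
    filter_mem_eq_inter, univ_inter]
  have houtside : ∑ j ∈ univ.filter (· ∉ J),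
      (ε j * h j * phat j - J.piecewise (-ε) ε j * h' j * phat j) = 0 :=
    sum_eq_zero fun j hj => by
      have hj : j ∉ J := (mem_filter.1 hj).2
      rw [piecewise_eq_of_notMem _ _ _ hj, hJc j hj, sub_self]
  rw [houtside, add_zero]
  refine sum_congr rfl fun j hj => ?_
  rw [piecewise_eq_of_mem _ _ _ hj, hJ j hj, Pi.neg_apply, ← hphat j]
  ring

lemma dvd_sub_sum_piecewise_neg {p phat h h' : ι → ℤ} {P : ℤ}
    (hphat : ∀ j, p j * phat j = P) {J : Finset ι} (hJeven : Even #J)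
    (hJ : ∀ j ∈ J, h j = p j - h' j) (hJc : ∀ j ∉ J, h j = h' j)
    {ε : ι → ℤ} (hε : ∀ j, ε j = 1 ∨ ε j = -1) {n : ℤ}
    (hn : 2 * P ∣ n - (P + ∑ j, ε j * h j * phat j)) :
    2 * P ∣ n - (P + ∑ j, J.piecewise (-ε) ε j * h' j * phat j) := by
  obtain ⟨k, hk⟩ := even_sum_sign_of_even_card hε hJeven
  have hdiff : 2 * P ∣ ∑ j, ε j * h j * phat j - ∑ j, J.piecewise (-ε) ε j * h' j * phat j :=
    ⟨k, by rw [sum_sub_sum_piecewise_neg hphat hJ hJc, hk]; ring⟩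
  exact (dvd_add hn hdiff).trans (dvd_of_eq (by ring))

theorem stmt_17_general (r : ℕ) (p : Fin r → ℤ)
    (P : ℤ)
    (phat : Fin r → ℤ) (hphat : ∀ j, p j * phat j = P)
    (h h' : Fin r → ℤ)
    (hrel : ∃ J : Finset (Fin r), Even J.card ∧
      (∀ j ∈ J, h j = p j - h' j) ∧ (∀ j ∉ J, h j = h' j))
    (F F' : ℤ → ℤ)
    (hFval : ∀ (n : ℤ) (ε : Fin r → ℤ), (∀ j, ε j = 1 ∨ ε j = -1) →
      2 * P ∣ n - (P + ∑ j, ε j * h j * phat j) → F n = -(∏ j, ε j))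
    (hFzero : ∀ n : ℤ,
      (¬ ∃ ε : Fin r → ℤ, (∀ j, ε j = 1 ∨ ε j = -1) ∧
        2 * P ∣ n - (P + ∑ j, ε j * h j * phat j)) → F n = 0)
    (hF'val : ∀ (n : ℤ) (ε : Fin r → ℤ), (∀ j, ε j = 1 ∨ ε j = -1) →
      2 * P ∣ n - (P + ∑ j, ε j * h' j * phat j) → F' n = -(∏ j, ε j))
    (hF'zero : ∀ n : ℤ,
      (¬ ∃ ε : Fin r → ℤ, (∀ j, ε j = 1 ∨ ε j = -1) ∧
        2 * P ∣ n - (P + ∑ j, ε j * h' j * phat j)) → F' n = 0) :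
    F = F' := by
  obtain ⟨J, hJeven, hJ, hJc⟩ := hrel
  have hJ' : ∀ j ∈ J, h' j = p j - h j := fun j hj => by rw [hJ j hj]; ring
  have hJc' : ∀ j ∉ J, h' j = h j := fun j hj => (hJc j hj).symm
  funext n
  by_cases hex : ∃ ε : Fin r → ℤ, (∀ j, ε j = 1 ∨ ε j = -1) ∧
      2 * P ∣ n - (P + ∑ j, ε j * h j * phat j)
  · obtain ⟨ε, hε, hn⟩ := hex
    rw [hFval n ε hε hn, hF'val n _ (sign_piecewise_neg hε J)
      (dvd_sub_sum_piecewise_neg hphat hJeven hJ hJc hε hn),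
      prod_piecewise_neg_of_even ε hJeven]
  · rw [hFzero n hex, hF'zero n]
    rintro ⟨ε, hε, hn⟩
    exact hex ⟨_, sign_piecewise_neg hε J, dvd_sub_sum_piecewise_neg hphat hJeven hJ' hJc' hε hn⟩

/-- For `h ∼ h'` in `𝔥` with `t_h = t_{h'} = 0`, the `0`-Hikami functions
coincide: `m⁰f^h = m⁰f^{h'}` as functions `ℤ → ℤ` (each is the `2P`-periodic
function equal to `-ε₁⋯ε_r` at `n ≡ P + Σ_j ε_j h_j p̂_j (mod 2P)` and `0` off
the Hikami set). -/
theorem stmt_17 (r : ℕ) (hr : 3 ≤ r) (p : Fin r → ℤ)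
    (hp : ∀ j, 0 < p j)
    (hcop : ∀ i j : Fin r, i ≠ j → IsCoprime (p i) (p j))
    (P : ℤ) (hP : P = ∏ j, p j)
    (phat : Fin r → ℤ) (hphat : ∀ j, p j * phat j = P)
    (h h' : Fin r → ℤ)
    (hh₁ : ∀ j, 0 ≤ h j ∧ h j ≤ p j)
    (hh₂ : 3 ≤ Set.ncard {j : Fin r | ¬ p j ∣ h j})
    (hh'₁ : ∀ j, 0 ≤ h' j ∧ h' j ≤ p j)
    (hh'₂ : 3 ≤ Set.ncard {j : Fin r | ¬ p j ∣ h' j})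
    (ht : ∀ j, ¬ p j ∣ h j) (ht' : ∀ j, ¬ p j ∣ h' j)
    (hrel : ∃ J : Finset (Fin r), Even J.card ∧
      (∀ j ∈ J, h j = p j - h' j) ∧ (∀ j ∉ J, h j = h' j))
    (F F' : ℤ → ℤ)
    (hFval : ∀ (n : ℤ) (ε : Fin r → ℤ), (∀ j, ε j = 1 ∨ ε j = -1) →
      2 * P ∣ n - (P + ∑ j, ε j * h j * phat j) → F n = -(∏ j, ε j))
    (hFzero : ∀ n : ℤ,
      (¬ ∃ ε : Fin r → ℤ, (∀ j, ε j = 1 ∨ ε j = -1) ∧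
        2 * P ∣ n - (P + ∑ j, ε j * h j * phat j)) → F n = 0)
    (hF'val : ∀ (n : ℤ) (ε : Fin r → ℤ), (∀ j, ε j = 1 ∨ ε j = -1) →
      2 * P ∣ n - (P + ∑ j, ε j * h' j * phat j) → F' n = -(∏ j, ε j))
    (hF'zero : ∀ n : ℤ,
      (¬ ∃ ε : Fin r → ℤ, (∀ j, ε j = 1 ∨ ε j = -1) ∧
        2 * P ∣ n - (P + ∑ j, ε j * h' j * phat j)) → F' n = 0) :
    F = F' :=
  stmt_17_general r p P phat hphat h h' hrel F F' hFval hFzero hF'val hF'zero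
end
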